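/- arXiv:2307.08780 — 4 statements merged into one kernel-verified Lean document; each statement's English description precedes it below -/
import Mathlib

section
/- There exists a letter-oriented integral NMDA A over the two-letter alphabet {a, b} (with discount factor 2 on every a-transition and 3 on every b-transition) such that no integral NDA is equivalent to A, with respect to both nonempty finite words and infinite words. -/
/-- A nondeterministic discounted-sum automaton with multiple discount factors (NMDA)
over an alphabet `α` with states `Q`: a set of initial states, a complete transition
relation, a rational weight and a rational discount factor (greater than one) on every
transition. -/
structure NMDA (α : Type) (Q : Type) where
  init : Set Q
  init_nonempty : init.Nonempty
  delta : Q → α → Q → Prop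
  complete : ∀ q a, ∃ q', delta q a q'
  weight : Q → α → Q → ℚ
  disc : Q → α → Q → ℚ
  disc_gt_one : ∀ q a q', delta q a q' → 1 < disc q a q'

namespace NMDA

variable {α Q : Type}

/-- `r` is a run of `A` on the finite word consisting of the first `n` letters of `w`. -/
def FinRun (A : NMDA α Q) (w : ℕ → α) (n : ℕ) (r : ℕ → Q) : Prop :=
  r 0 ∈ A.init ∧ ∀ i < n, A.delta (r i) (w i) (r (i + 1))

/-- `r` is a run of `A` on the infinite word `w`. -/
def InfRun (A : NMDA α Q) (w : ℕ → α) (r : ℕ → Q) : Prop :=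
  r 0 ∈ A.init ∧ ∀ i, A.delta (r i) (w i) (r (i + 1))

/-- The (discounted-sum) value of the length-`n` prefix of the run `r` on the word `w`. -/
noncomputable def runVal (A : NMDA α Q) (w : ℕ → α) (r : ℕ → Q) (n : ℕ) : ℝ :=
  ∑ i ∈ Finset.range n,
    (A.weight (r i) (w i) (r (i + 1)) : ℝ) *
      ∏ j ∈ Finset.range i, (1 / (A.disc (r j) (w j) (r (j + 1)) : ℝ))

/-- The (discounted-sum) value of the infinite run `r` on the infinite word `w`. -/
noncomputable def infRunVal (A : NMDA α Q) (w : ℕ → α) (r : ℕ → Q) : ℝ :=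
  ∑' i : ℕ,
    (A.weight (r i) (w i) (r (i + 1)) : ℝ) *
      ∏ j ∈ Finset.range i, (1 / (A.disc (r j) (w j) (r (j + 1)) : ℝ))

/-- The value of `A` on the finite word given by the first `n` letters of `w`:
the infimum of the values of its runs on that word. -/
noncomputable def finVal (A : NMDA α Q) (w : ℕ → α) (n : ℕ) : ℝ :=
  sInf { x : ℝ | ∃ r : ℕ → Q, A.FinRun w n r ∧ x = A.runVal w r n }

/-- The value of `A` on the infinite word `w`:
the infimum of the values of its runs on `w`. -/
noncomputable def infVal (A : NMDA α Q) (w : ℕ → α) : ℝ :=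
  sInf { x : ℝ | ∃ r : ℕ → Q, A.InfRun w r ∧ x = A.infRunVal w r }

/-- An NMDA is integral if all its discount factors are integers. -/
def Integral (A : NMDA α Q) : Prop :=
  ∀ q a q', A.delta q a q' → ∃ k : ℤ, A.disc q a q' = (k : ℚ)

/-- An NMDA is deterministic (a DMDA) if it has a single initial state and at most one
transition from every state over every letter. -/
def Deterministic (A : NMDA α Q) : Prop :=
  (∃ q₀ : Q, A.init = {q₀}) ∧
    ∀ q a q₁ q₂, A.delta q a q₁ → A.delta q a q₂ → q₁ = q₂

/-- A `l`-NDA: an NMDA whose discount factor is constantly `l` on all transitions. -/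
def ConstDisc (A : NMDA α Q) (l : ℚ) : Prop :=
  ∀ q a q', A.delta q a q' → A.disc q a q' = l

/-- `A` is tidy with the choice function `θ`: the discount factor of the last transition
of every run on every nonempty finite word `u` equals `θ u`. -/
def TidyWith (A : NMDA α Q) (θ : List α → ℕ) : Prop :=
  ∀ (w : ℕ → α) (n : ℕ) (r : ℕ → Q), A.FinRun w (n + 1) r →
    A.disc (r n) (w n) (r (n + 1)) = (θ (List.ofFn fun i : Fin (n + 1) => w i.val) : ℚ)

/-- A `θ`-NMDA: an integral NMDA that is tidy with the choice function `θ`. -/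
def ThetaNMDA (A : NMDA α Q) (θ : List α → ℕ) : Prop :=
  A.Integral ∧ A.TidyWith θ

end NMDA


namespace NMDA

variable {α Q : Type}

/-- Build an infinite run from a given state, using completeness. -/
noncomputable def mkRun (B : NMDA α Q) (w : ℕ → α) (q0 : Q) : ℕ → Q
  | 0 => q0
  | i + 1 => Classical.choose (B.complete (B.mkRun w q0 i) (w i))

@[simp] lemma mkRun_zero (B : NMDA α Q) (w : ℕ → α) (q0 : Q) : B.mkRun w q0 0 = q0 := rfl

lemma mkRun_step (B : NMDA α Q) (w : ℕ → α) (q0 : Q) (i : ℕ) :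
    B.delta (B.mkRun w q0 i) (w i) (B.mkRun w q0 (i + 1)) :=
  Classical.choose_spec (B.complete (B.mkRun w q0 i) (w i))

lemma runVal_congr (B : NMDA α Q) {w w' : ℕ → α} {r r' : ℕ → Q} {n : ℕ}
    (hw : ∀ i < n, w i = w' i) (hr : ∀ i ≤ n, r i = r' i) :
    B.runVal w r n = B.runVal w' r' n := by
  unfold runVal
  refine Finset.sum_congr rfl fun i hi => ?_
  rw [Finset.mem_range] at hi
  have h1 : w i = w' i := hw i hi
  have h2 : r i = r' i := hr i hi.le
  have h3 : r (i + 1) = r' (i + 1) := hr (i + 1) hi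
  rw [h1, h2, h3]
  congr 1
  refine Finset.prod_congr rfl fun j hj => ?_
  rw [Finset.mem_range] at hj
  have hj' : j < n := hj.trans hi
  rw [hw j hj', hr j hj'.le, hr (j + 1) (Nat.succ_le_of_lt hj')]

/-- glue a finite prefix run `p` (up to index `k`) with a tail run `s` (with `s 0 = p k`). -/
def glue (p s : ℕ → Q) (k : ℕ) : ℕ → Q := fun i => if i ≤ k then p i else s (i - k)

lemma glue_le {p s : ℕ → Q} {k i : ℕ} (h : i ≤ k) : glue p s k i = p i := if_pos h

lemma glue_shift {p s : ℕ → Q} {k : ℕ} (h0 : s 0 = p k) (i : ℕ) :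
    glue p s k (i + k) = s i := by
  unfold glue
  rcases Nat.eq_zero_or_pos i with rfl | hi
  · simpa using h0.symm
  · rw [if_neg (by omega), Nat.add_sub_cancel]

lemma glue_infRun {B : NMDA α Q} {w : ℕ → α} {p s : ℕ → Q} {k : ℕ}
    (hp : B.FinRun w k p) (h0 : s 0 = p k)
    (hs : ∀ i, B.delta (s i) (w (i + k)) (s (i + 1))) :
    B.InfRun w (glue p s k) := by
  constructor
  · rw [glue_le (Nat.zero_le k)]; exact hp.1
  · intro i
    rcases Nat.lt_or_ge i k with hik | hik
    · rw [glue_le hik.le, glue_le hik]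
      exact hp.2 i hik
    · obtain ⟨j, rfl⟩ : ∃ j, i = j + k := ⟨i - k, by omega⟩
      have h1 := glue_shift h0 (k := k) (p := p) (s := s) j
      have h2 := glue_shift h0 (p := p) (s := s) (j + 1)
      rw [show j + 1 + k = j + k + 1 by omega] at h2
      rw [h1, h2]
      exact hs j

end NMDA
namespace NMDA

variable {α Q : Type}

section ConstDisc

variable {B : NMDA α Q} {l : ℕ} {M : ℝ}

lemma prod_disc (hl : 2 ≤ l) (hC : B.ConstDisc l) {w : ℕ → α} {r : ℕ → Q} {i : ℕ}
    (h : ∀ j < i, B.delta (r j) (w j) (r (j + 1))) :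
    ∏ j ∈ Finset.range i, (1 / (B.disc (r j) (w j) (r (j + 1)) : ℝ)) = (1 / l : ℝ) ^ i := by
  have hcongr : ∀ j ∈ Finset.range i,
      (1 / (B.disc (r j) (w j) (r (j + 1)) : ℝ)) = (1 / l : ℝ) := by
    intro j hj
    rw [Finset.mem_range] at hj
    rw [hC _ _ _ (h j hj)]
    push_cast
    ring
  rw [Finset.prod_congr rfl hcongr, Finset.prod_const, Finset.card_range]

lemma abs_term_le (hl : 2 ≤ l) (hC : B.ConstDisc l)
    (hM : ∀ q a q', |(B.weight q a q' : ℝ)| ≤ M) {w : ℕ → α} {r : ℕ → Q} {i : ℕ}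
    (h : ∀ j < i, B.delta (r j) (w j) (r (j + 1))) :
    |(B.weight (r i) (w i) (r (i + 1)) : ℝ) *
      ∏ j ∈ Finset.range i, (1 / (B.disc (r j) (w j) (r (j + 1)) : ℝ))| ≤ M * (1 / l : ℝ) ^ i := by
  rw [abs_mul, prod_disc hl hC h]
  have h1 : (0:ℝ) < 1 / l := by
    have : (0:ℝ) < l := by positivity
    positivity
  rw [abs_of_pos (pow_pos h1 i)]
  exact mul_le_mul_of_nonneg_right (hM _ _ _) (pow_pos h1 i).le

lemma inv_l_lt_one (hl : 2 ≤ l) : (1 / l : ℝ) < 1 := by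
  rw [div_lt_one (by exact_mod_cast Nat.lt_of_lt_of_le two_pos hl)]
  exact_mod_cast Nat.lt_of_lt_of_le one_lt_two hl

lemma summable_run (hl : 2 ≤ l) (hC : B.ConstDisc l)
    (hM : ∀ q a q', |(B.weight q a q' : ℝ)| ≤ M) {w : ℕ → α} {r : ℕ → Q}
    (hr : ∀ i, B.delta (r i) (w i) (r (i + 1))) :
    Summable (fun i : ℕ => (B.weight (r i) (w i) (r (i + 1)) : ℝ) *
      ∏ j ∈ Finset.range i, (1 / (B.disc (r j) (w j) (r (j + 1)) : ℝ))) := by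
  refine Summable.of_abs ?_
  refine Summable.of_nonneg_of_le (fun i => abs_nonneg _)
    (fun i => abs_term_le hl hC hM fun j _ => hr j) ?_
  exact (summable_geometric_of_lt_one (by positivity) (inv_l_lt_one hl)).mul_left M

lemma abs_infRunVal_le (hl : 2 ≤ l) (hC : B.ConstDisc l)
    (hM : ∀ q a q', |(B.weight q a q' : ℝ)| ≤ M) {w : ℕ → α} {r : ℕ → Q}
    (hr : ∀ i, B.delta (r i) (w i) (r (i + 1))) :
    |B.infRunVal w r| ≤ M * (1 - 1 / l : ℝ)⁻¹ := by
  have hsum := summable_run hl hC hM hr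
  have h1 : |B.infRunVal w r| ≤ ∑' i : ℕ, |(B.weight (r i) (w i) (r (i + 1)) : ℝ) *
      ∏ j ∈ Finset.range i, (1 / (B.disc (r j) (w j) (r (j + 1)) : ℝ))| := by
    have := norm_tsum_le_tsum_norm (f := fun i : ℕ => (B.weight (r i) (w i) (r (i + 1)) : ℝ) *
      ∏ j ∈ Finset.range i, (1 / (B.disc (r j) (w j) (r (j + 1)) : ℝ)))
      (by simpa only [Real.norm_eq_abs] using hsum.abs)
    simpa only [Real.norm_eq_abs, infRunVal] using this
  refine h1.trans ?_
  have h2 : ∑' i : ℕ, M * (1 / l : ℝ) ^ i = M * (1 - 1 / l : ℝ)⁻¹ := by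
    rw [tsum_mul_left, tsum_geometric_of_lt_one (by positivity) (inv_l_lt_one hl)]
  rw [← h2]
  exact Summable.tsum_le_tsum (fun i => abs_term_le hl hC hM fun j _ => hr j) hsum.abs
    ((summable_geometric_of_lt_one (by positivity) (inv_l_lt_one hl)).mul_left M)

lemma infRunVal_split (hl : 2 ≤ l) (hC : B.ConstDisc l)
    (hM : ∀ q a q', |(B.weight q a q' : ℝ)| ≤ M) {w : ℕ → α} {r : ℕ → Q}
    (hr : ∀ i, B.delta (r i) (w i) (r (i + 1))) (k : ℕ) :
    B.infRunVal w r = B.runVal w r k +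
      (1 / l : ℝ) ^ k * B.infRunVal (fun i => w (i + k)) (fun i => r (i + k)) := by
  have hsum := summable_run hl hC hM hr
  rw [infRunVal, ← Summable.sum_add_tsum_nat_add k hsum]
  congr 1
  have hshift : ∀ i : ℕ, (B.weight (r (i + k)) (w (i + k)) (r (i + k + 1)) : ℝ) *
      ∏ j ∈ Finset.range (i + k), (1 / (B.disc (r j) (w j) (r (j + 1)) : ℝ)) =
      (1 / l : ℝ) ^ k * ((B.weight (r (i + k)) (w (i + k)) (r (i + k + 1)) : ℝ) *
        (1 / l : ℝ) ^ i) := by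
    intro i
    rw [prod_disc hl hC fun j _ => hr j, pow_add]
    ring
  rw [tsum_congr hshift, tsum_mul_left]
  congr 1
  rw [infRunVal]
  refine tsum_congr fun i => ?_
  have : ∀ j < i, B.delta ((fun i => r (i + k)) j) ((fun i => w (i + k)) j)
      ((fun i => r (i + k)) (j + 1)) := by
    intro j _
    simpa [Nat.add_right_comm] using hr (j + k)
  rw [prod_disc hl hC this]
  simp [Nat.add_right_comm]

lemma runVal_succ_const (hl : 2 ≤ l) (hC : B.ConstDisc l) {w : ℕ → α} {r : ℕ → Q} {n : ℕ}
    (h : ∀ i < n + 1, B.delta (r i) (w i) (r (i + 1))) :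
    B.runVal w r (n + 1) = B.runVal w r n +
      (B.weight (r n) (w n) (r (n + 1)) : ℝ) * (1 / l : ℝ) ^ n := by
  unfold runVal
  rw [Finset.sum_range_succ, prod_disc hl hC fun j hj => h j (by omega)]

end ConstDisc

end NMDA
lemma rat_den_dvd_int {q : ℚ} {D : ℕ} (h : q.den ∣ D) : ∃ z : ℤ, (D : ℚ) * q = z := by
  obtain ⟨d, hd⟩ := h
  refine ⟨q.num * d, ?_⟩
  have hden : (q.den : ℚ) ≠ 0 := by exact_mod_cast q.den_nz
  have hq : q * (q.den : ℚ) = q.num := by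
    nth_rewrite 1 [← Rat.num_div_den q]
    exact div_mul_cancel₀ _ hden
  push_cast [hd]
  rw [mul_comm ((q.den : ℚ) * (d : ℚ)) q, ← mul_assoc, hq]

namespace NMDA

variable {α Q : Type}

section ConstDisc

variable {B : NMDA α Q} {l : ℕ} {M : ℝ}

lemma runVal_rat (hl : 2 ≤ l) (hC : B.ConstDisc l) {D : ℕ}
    (hD : ∀ q a q', (B.weight q a q').den ∣ D) {w : ℕ → α} {r : ℕ → Q} {n : ℕ}
    (hr : ∀ i < n + 1, B.delta (r i) (w i) (r (i + 1))) :
    ∃ z : ℤ, (z : ℝ) = (D : ℝ) * (l : ℝ) ^ n * B.runVal w r (n + 1) := by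
  have hl0 : (l : ℝ) ≠ 0 := by positivity
  choose zz hzz using fun i : ℕ => rat_den_dvd_int (hD (r i) (w i) (r (i + 1)))
  refine ⟨∑ i ∈ Finset.range (n + 1), zz i * (l : ℤ) ^ (n - i), ?_⟩
  rw [runVal, Finset.mul_sum]
  push_cast
  refine Finset.sum_congr rfl fun i hi => ?_
  rw [Finset.mem_range] at hi
  have hin : i ≤ n := by omega
  rw [prod_disc hl hC fun j hj => hr j (by omega)]
  have hzzi : ((zz i : ℝ)) = (D : ℝ) * (B.weight (r i) (w i) (r (i + 1)) : ℝ) := by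
    exact_mod_cast congrArg (fun q : ℚ => (q : ℝ)) (hzz i).symm
  rw [hzzi]
  have hpow : (l : ℝ) ^ n = (l : ℝ) ^ (n - i) * (l : ℝ) ^ i := by
    rw [← pow_add, Nat.sub_add_cancel hin]
  rw [hpow]
  field_simp
  have hli : (l : ℝ) ^ i * (1 / (l : ℝ)) ^ i = 1 := by rw [← mul_pow, mul_one_div_cancel hl0, one_pow]
  rw [mul_assoc _ ((l : ℝ) ^ i), hli, mul_one]

end ConstDisc

lemma finVal_set_finite (B : NMDA α Q) [Fintype Q] (w : ℕ → α) (n : ℕ) :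
    { x : ℝ | ∃ r : ℕ → Q, B.FinRun w n r ∧ x = B.runVal w r n }.Finite := by
  classical
  have hsub : { x : ℝ | ∃ r : ℕ → Q, B.FinRun w n r ∧ x = B.runVal w r n } ⊆
      Set.range (fun p : Fin (n + 1) → Q =>
        B.runVal w (fun i => p ⟨min i n, by omega⟩) n) := by
    rintro x ⟨r, hr, rfl⟩
    refine ⟨fun i => r i.val, ?_⟩
    refine runVal_congr B (fun i _ => rfl) fun i hi => ?_
    simp [Nat.min_eq_left hi]
  exact (Set.finite_range _).subset hsub

lemma finVal_set_nonempty (B : NMDA α Q) (w : ℕ → α) (n : ℕ) :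
    { x : ℝ | ∃ r : ℕ → Q, B.FinRun w n r ∧ x = B.runVal w r n }.Nonempty := by
  obtain ⟨q0, hq0⟩ := B.init_nonempty
  exact ⟨B.runVal w (B.mkRun w q0) n,
    ⟨B.mkRun w q0, ⟨by simpa using hq0, fun i _ => B.mkRun_step w q0 i⟩, rfl⟩⟩

lemma finVal_le (B : NMDA α Q) [Fintype Q] {w : ℕ → α} {n : ℕ} {r : ℕ → Q}
    (hr : B.FinRun w n r) : B.finVal w n ≤ B.runVal w r n :=
  csInf_le (B.finVal_set_finite w n).bddBelow ⟨r, hr, rfl⟩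

/-- The value of a finite word is attained by some run. -/
lemma finVal_mem (B : NMDA α Q) [Fintype Q] (w : ℕ → α) (n : ℕ) :
    ∃ r : ℕ → Q, B.FinRun w n r ∧ B.finVal w n = B.runVal w r n :=
  (B.finVal_set_nonempty w n).csInf_mem (B.finVal_set_finite w n)

end NMDA
namespace NMDA

variable {α Q : Type}

/-- The value of `B` from state `q` on infinite word `w` (ignoring initial states). -/
noncomputable def tailVal (B : NMDA α Q) (w : ℕ → α) (q : Q) : ℝ :=
  sInf { x : ℝ | ∃ s : ℕ → Q, s 0 = q ∧ (∀ i, B.delta (s i) (w i) (s (i + 1))) ∧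
    x = B.infRunVal w s }

lemma tailVal_set_nonempty (B : NMDA α Q) (w : ℕ → α) (q : Q) :
    { x : ℝ | ∃ s : ℕ → Q, s 0 = q ∧ (∀ i, B.delta (s i) (w i) (s (i + 1))) ∧
      x = B.infRunVal w s }.Nonempty :=
  ⟨_, B.mkRun w q, rfl, fun i => B.mkRun_step w q i, rfl⟩

section ConstDisc

variable {B : NMDA α Q} {l : ℕ} {M : ℝ}

lemma tailVal_set_bddBelow (hl : 2 ≤ l) (hC : B.ConstDisc l)
    (hM : ∀ q a q', |(B.weight q a q' : ℝ)| ≤ M) (w : ℕ → α) (q : Q) :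
    BddBelow { x : ℝ | ∃ s : ℕ → Q, s 0 = q ∧ (∀ i, B.delta (s i) (w i) (s (i + 1))) ∧
      x = B.infRunVal w s } := by
  refine ⟨-(M * (1 - 1 / l : ℝ)⁻¹), ?_⟩
  rintro x ⟨s, _, hs, rfl⟩
  exact (abs_le.1 (abs_infRunVal_le hl hC hM hs)).1

lemma tailVal_le (hl : 2 ≤ l) (hC : B.ConstDisc l)
    (hM : ∀ q a q', |(B.weight q a q' : ℝ)| ≤ M) {w : ℕ → α} {s : ℕ → Q}
    (hs : ∀ i, B.delta (s i) (w i) (s (i + 1))) :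
    B.tailVal w (s 0) ≤ B.infRunVal w s :=
  csInf_le (tailVal_set_bddBelow hl hC hM w (s 0)) ⟨s, rfl, hs, rfl⟩

lemma neg_le_tailVal (hl : 2 ≤ l) (hC : B.ConstDisc l)
    (hM : ∀ q a q', |(B.weight q a q' : ℝ)| ≤ M) (w : ℕ → α) (q : Q) :
    -(M * (1 - 1 / l : ℝ)⁻¹) ≤ B.tailVal w q := by
  refine le_csInf (B.tailVal_set_nonempty w q) ?_
  rintro x ⟨s, _, hs, rfl⟩
  exact (abs_le.1 (abs_infRunVal_le hl hC hM hs)).1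

lemma exists_tail_run_lt (hl : 2 ≤ l) (hC : B.ConstDisc l)
    (hM : ∀ q a q', |(B.weight q a q' : ℝ)| ≤ M) (w : ℕ → α) (q : Q) {ε : ℝ} (hε : 0 < ε) :
    ∃ s : ℕ → Q, s 0 = q ∧ (∀ i, B.delta (s i) (w i) (s (i + 1))) ∧
      B.infRunVal w s < B.tailVal w q + ε := by
  have h := (csInf_lt_iff (tailVal_set_bddBelow hl hC hM w q)
    (B.tailVal_set_nonempty w q)).1 (show B.tailVal w q < B.tailVal w q + ε by linarith)
  obtain ⟨x, ⟨s, h0, hs, rfl⟩, hlt⟩ := h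
  exact ⟨s, h0, hs, hlt⟩

lemma infVal_set_nonempty (B : NMDA α Q) (w : ℕ → α) :
    { x : ℝ | ∃ r : ℕ → Q, B.InfRun w r ∧ x = B.infRunVal w r }.Nonempty := by
  obtain ⟨q0, hq0⟩ := B.init_nonempty
  exact ⟨_, B.mkRun w q0, ⟨by simpa using hq0, fun i => B.mkRun_step w q0 i⟩, rfl⟩

lemma infVal_set_bddBelow (hl : 2 ≤ l) (hC : B.ConstDisc l)
    (hM : ∀ q a q', |(B.weight q a q' : ℝ)| ≤ M) (w : ℕ → α) :
    BddBelow { x : ℝ | ∃ r : ℕ → Q, B.InfRun w r ∧ x = B.infRunVal w r } := by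
  refine ⟨-(M * (1 - 1 / l : ℝ)⁻¹), ?_⟩
  rintro x ⟨r, hr, rfl⟩
  exact (abs_le.1 (abs_infRunVal_le hl hC hM hr.2)).1

lemma infVal_decomp [Fintype Q] (hl : 2 ≤ l) (hC : B.ConstDisc l)
    (hM : ∀ q a q', |(B.weight q a q' : ℝ)| ≤ M) (w : ℕ → α) (k : ℕ) :
    ∃ r : ℕ → Q, B.FinRun w k r ∧
      B.infVal w = B.runVal w r k + (1 / l : ℝ) ^ k * B.tailVal (fun i => w (i + k)) (r k) := by
  classical
  have hl0 : (0:ℝ) < (1 / l : ℝ) := by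
    have : (0:ℝ) < l := by positivity
    positivity
  set F := { x : ℝ | ∃ r : ℕ → Q, B.FinRun w k r ∧
      x = B.runVal w r k + (1 / l : ℝ) ^ k * B.tailVal (fun i => w (i + k)) (r k) } with hF
  have hFne : F.Nonempty := by
    obtain ⟨q0, hq0⟩ := B.init_nonempty
    exact ⟨_, B.mkRun w q0, ⟨by simpa using hq0, fun i _ => B.mkRun_step w q0 i⟩, rfl⟩
  have hFfin : F.Finite := by
    have hsub : F ⊆ Set.range (fun p : Fin (k + 1) → Q =>
        B.runVal w (fun i => p ⟨min i k, by omega⟩) k +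
          (1 / l : ℝ) ^ k * B.tailVal (fun i => w (i + k)) (p ⟨min k k, by omega⟩)) := by
      rintro x ⟨r, hr, rfl⟩
      refine ⟨fun i => r i.val, ?_⟩
      have h1 : B.runVal w r k = B.runVal w (fun i => r (min i k)) k :=
        runVal_congr B (fun i _ => rfl) fun i hi => by simp [Nat.min_eq_left hi]
      simp only [← h1, Nat.min_self]
    exact (Set.finite_range _).subset hsub
  have hFbdd : BddBelow F := hFfin.bddBelow
  have key : B.infVal w = sInf F := by
    refine le_antisymm ?_ ?_
    · -- infVal ≤ sInf F
      refine le_csInf hFne ?_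
      rintro y ⟨p, hp, rfl⟩
      refine le_of_forall_pos_le_add fun ε hε => ?_
      obtain ⟨s, h0, hs, hslt⟩ := exists_tail_run_lt hl hC hM (fun i => w (i + k)) (p k)
        (ε := ε * (l : ℝ) ^ k) (by positivity)
      have hglue := glue_infRun hp h0 (fun i => by simpa using hs i)
      have hval : B.infRunVal w (glue p s k) =
          B.runVal w (glue p s k) k + (1 / l : ℝ) ^ k *
            B.infRunVal (fun i => w (i + k)) (fun i => glue p s k (i + k)) :=
        infRunVal_split hl hC hM hglue.2 k
      have hshift : (fun i => glue p s k (i + k)) = s := funext fun i => glue_shift h0 i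
      have hpre : B.runVal w (glue p s k) k = B.runVal w p k :=
        runVal_congr B (fun i _ => rfl) fun i hi => glue_le hi
      rw [hshift, hpre] at hval
      have hmem : B.infRunVal w (glue p s k) ∈
          { x : ℝ | ∃ r : ℕ → Q, B.InfRun w r ∧ x = B.infRunVal w r } :=
        ⟨glue p s k, hglue, rfl⟩
      have h2 : B.infVal w ≤ B.infRunVal w (glue p s k) :=
        csInf_le (infVal_set_bddBelow hl hC hM w) hmem
      have h3 : B.infRunVal w (glue p s k) ≤
          B.runVal w p k + (1 / l : ℝ) ^ k * B.tailVal (fun i => w (i + k)) (p k) + ε := by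
        rw [hval]
        rw [← h0] at hslt ⊢
        have h4 : (1 / l : ℝ) ^ k * B.infRunVal (fun i => w (i + k)) s ≤
            (1 / l : ℝ) ^ k * (B.tailVal (fun i => w (i + k)) (s 0) + ε * (l : ℝ) ^ k) :=
          mul_le_mul_of_nonneg_left (le_of_lt hslt) (by positivity)
        have h5 : (1 / l : ℝ) ^ k * (l : ℝ) ^ k = 1 := by
          rw [← mul_pow]
          have : (l : ℝ) ≠ 0 := by positivity
          field_simp
          exact one_pow k
        nlinarith [h4, h5]
      exact h2.trans h3
    · -- sInf F ≤ infVal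
      refine le_csInf (B.infVal_set_nonempty w) ?_
      rintro x ⟨r, hr, rfl⟩
      have hval : B.infRunVal w r = B.runVal w r k + (1 / l : ℝ) ^ k *
          B.infRunVal (fun i => w (i + k)) (fun i => r (i + k)) :=
        infRunVal_split hl hC hM hr.2 k
      have htail : B.tailVal (fun i => w (i + k)) (r k) ≤
          B.infRunVal (fun i => w (i + k)) (fun i => r (i + k)) := by
        have := tailVal_le hl hC hM (w := fun i => w (i + k)) (s := fun i => r (i + k))
          (fun i => by simpa [Nat.add_right_comm] using hr.2 (i + k))
        simpa using this
      have hy : B.runVal w r k + (1 / l : ℝ) ^ k * B.tailVal (fun i => w (i + k)) (r k) ∈ F :=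
        ⟨r, ⟨hr.1, fun i _ => hr.2 i⟩, rfl⟩
      refine (csInf_le hFbdd hy).trans ?_
      rw [hval]
      have := mul_le_mul_of_nonneg_left htail (le_of_lt (pow_pos hl0 k))
      linarith
  rw [key]
  have := hFne.csInf_mem hFfin
  rw [hF] at this
  exact this

end ConstDisc

end NMDA
namespace LONMDA

open NMDA Finset

/-- The one-state letter-oriented NMDA: discount 2 on letter 0, discount 3 on letter 1,
all weights 1. -/
def Aaut : NMDA (Fin 2) Unit where
  init := Set.univ
  init_nonempty := ⟨(), trivial⟩
  delta := fun _ _ _ => True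
  complete := fun _ _ => ⟨(), trivial⟩
  weight := fun _ _ _ => 1
  disc := fun _ a _ => if a = 0 then 2 else 3
  disc_gt_one := by intro _ a _ _; split <;> norm_num

/-- The real discount factor of a letter. -/
noncomputable def dsc (a : Fin 2) : ℝ := if a = 0 then 2 else 3

lemma dsc_pos (a : Fin 2) : 0 < dsc a := by unfold dsc; split <;> norm_num

lemma one_div_dsc_le (a : Fin 2) : 1 / dsc a ≤ 1 / 2 := by
  unfold dsc; split <;> norm_num

/-- The discounted coefficient of position `i` in any run of `Aaut` on `w`. -/
noncomputable def ap (w : ℕ → Fin 2) (i : ℕ) : ℝ := ∏ j ∈ range i, (1 / dsc (w j))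

lemma ap_pos (w : ℕ → Fin 2) (i : ℕ) : 0 < ap w i :=
  prod_pos fun j _ => one_div_pos.mpr (dsc_pos _)

lemma ap_le (w : ℕ → Fin 2) (i : ℕ) : ap w i ≤ (1 / 2 : ℝ) ^ i := by
  have h := Finset.prod_le_prod (s := range i) (f := fun j => 1 / dsc (w j))
    (g := fun _ => (1 / 2 : ℝ)) (fun j _ => (one_div_pos.mpr (dsc_pos _)).le)
    (fun j _ => one_div_dsc_le _)
  unfold ap
  simpa using h

lemma summable_ap (w : ℕ → Fin 2) : Summable (ap w) :=
  Summable.of_nonneg_of_le (fun i => (ap_pos w i).le) (fun i => ap_le w i)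
    (summable_geometric_of_lt_one (by norm_num) (by norm_num))

lemma Aaut_runVal (w : ℕ → Fin 2) (r : ℕ → Unit) (n : ℕ) :
    Aaut.runVal w r n = ∑ i ∈ range n, ap w i := by
  unfold NMDA.runVal ap
  refine Finset.sum_congr rfl fun i _ => ?_
  have h1 : (Aaut.weight (r i) (w i) (r (i + 1)) : ℝ) = 1 := by norm_num [Aaut]
  rw [h1, one_mul]
  refine Finset.prod_congr rfl fun j _ => ?_
  show 1 / ((if w j = 0 then (2:ℚ) else 3 : ℚ) : ℝ) = 1 / dsc (w j)
  unfold dsc; split <;> norm_num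

lemma Aaut_infRunVal (w : ℕ → Fin 2) (r : ℕ → Unit) :
    Aaut.infRunVal w r = ∑' i, ap w i := by
  unfold NMDA.infRunVal
  refine tsum_congr fun i => ?_
  have h1 : (Aaut.weight (r i) (w i) (r (i + 1)) : ℝ) = 1 := by norm_num [Aaut]
  rw [h1, one_mul]
  unfold ap
  refine Finset.prod_congr rfl fun j _ => ?_
  show 1 / ((if w j = 0 then (2:ℚ) else 3 : ℚ) : ℝ) = 1 / dsc (w j)
  unfold dsc; split <;> norm_num

lemma Aaut_finVal (w : ℕ → Fin 2) (n : ℕ) :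
    Aaut.finVal w n = ∑ i ∈ range n, ap w i := by
  unfold NMDA.finVal
  have hset : { x : ℝ | ∃ r : ℕ → Unit, Aaut.FinRun w n r ∧ x = Aaut.runVal w r n } =
      {∑ i ∈ range n, ap w i} := by
    ext x
    simp only [Set.mem_setOf_eq, Set.mem_singleton_iff]
    constructor
    · rintro ⟨r, _, rfl⟩; exact Aaut_runVal w r n
    · rintro rfl
      exact ⟨fun _ => (), ⟨trivial, fun _ _ => trivial⟩, (Aaut_runVal w _ n).symm⟩
  rw [hset, csInf_singleton]

lemma Aaut_infVal (w : ℕ → Fin 2) :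
    Aaut.infVal w = ∑' i, ap w i := by
  unfold NMDA.infVal
  have hset : { x : ℝ | ∃ r : ℕ → Unit, Aaut.InfRun w r ∧ x = Aaut.infRunVal w r } =
      {∑' i, ap w i} := by
    ext x
    simp only [Set.mem_setOf_eq, Set.mem_singleton_iff]
    constructor
    · rintro ⟨r, _, rfl⟩; exact Aaut_infRunVal w r
    · rintro rfl
      exact ⟨fun _ => (), ⟨trivial, fun _ => trivial⟩, (Aaut_infRunVal w _).symm⟩
  rw [hset, csInf_singleton]

end LONMDA
namespace LONMDA

open NMDA Finset

def w0 : ℕ → Fin 2 := fun _ => 0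
def w1 : ℕ → Fin 2 := fun _ => 1
def wk (k : ℕ) : ℕ → Fin 2 := fun i => if i < k then 1 else 0
def vk (k : ℕ) : ℕ → Fin 2 := fun i => if i = k then 1 else 0

@[simp] lemma dsc_zero : dsc 0 = 2 := by norm_num [dsc]
@[simp] lemma dsc_one : dsc 1 = 3 := by norm_num [dsc, Fin.one_eq_zero_iff]

lemma wk_shift (k : ℕ) : (fun i => wk k (i + k)) = w0 := by
  funext i; simp only [wk, w0]; rw [if_neg (by omega)]

lemma ap_eq_pow {w : ℕ → Fin 2} {c : ℝ} {i : ℕ} (h : ∀ j < i, 1 / dsc (w j) = c) :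
    ap w i = c ^ i := by
  unfold ap
  rw [Finset.prod_congr rfl fun j hj => h j (Finset.mem_range.1 hj), Finset.prod_const,
    Finset.card_range]

lemma ap_w0 (i : ℕ) : ap w0 i = (1 / 2 : ℝ) ^ i :=
  ap_eq_pow fun j _ => by simp [w0]

lemma ap_w1 (i : ℕ) : ap w1 i = (1 / 3 : ℝ) ^ i :=
  ap_eq_pow fun j _ => by simp [w1]

lemma ap_wk_le {k i : ℕ} (h : i ≤ k) : ap (wk k) i = (1 / 3 : ℝ) ^ i :=
  ap_eq_pow fun j hj => by simp [wk, if_pos (by omega : j < k)]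

lemma ap_wk_add (k i : ℕ) : ap (wk k) (i + k) = (1 / 3 : ℝ) ^ k * (1 / 2 : ℝ) ^ i := by
  rw [add_comm i k]
  unfold ap
  rw [Finset.prod_range_add]
  congr 1
  · rw [Finset.prod_congr rfl fun j hj => ?_, Finset.prod_const, Finset.card_range]
    rw [show wk k j = 1 by simp [wk, if_pos (Finset.mem_range.1 hj)]]
    simp
  · rw [Finset.prod_congr rfl fun j _ => ?_, Finset.prod_const, Finset.card_range]
    rw [show wk k (k + j) = 0 by simp only [wk]; rw [if_neg (by omega)]]
    simp

lemma ap_vk_le {k i : ℕ} (h : i ≤ k) : ap (vk k) i = (1 / 2 : ℝ) ^ i :=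
  ap_eq_pow fun j hj => by simp only [vk]; rw [if_neg (by omega)]; simp

lemma ap_vk_add (k i : ℕ) : ap (vk k) (i + (k + 1)) =
    (1 / 3 : ℝ) * ((1 / 2 : ℝ) ^ k * (1 / 2 : ℝ) ^ i) := by
  rw [add_comm i (k + 1)]
  unfold ap
  rw [Finset.prod_range_add, Finset.prod_range_succ]
  have h1 : ∏ j ∈ range k, (1 / dsc (vk k j)) = (1 / 2 : ℝ) ^ k := by
    rw [Finset.prod_congr rfl fun j hj => ?_, Finset.prod_const, Finset.card_range]
    have := Finset.mem_range.1 hj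
    simp only [vk]; rw [if_neg (by omega)]; simp
  have h2 : (1 : ℝ) / dsc (vk k k) = 1 / 3 := by simp [vk]
  have h3 : ∏ j ∈ range i, (1 / dsc (vk k (k + 1 + j))) = (1 / 2 : ℝ) ^ i := by
    rw [Finset.prod_congr rfl fun j _ => ?_, Finset.prod_const, Finset.card_range]
    simp only [vk]; rw [if_neg (by omega)]; simp
  rw [h1, h2, h3]
  ring

lemma geom2_sum (n : ℕ) : ∑ i ∈ range n, (1 / 2 : ℝ) ^ i = 2 - 2 * (1 / 2 : ℝ) ^ n := by
  rw [geom_sum_eq (by norm_num)]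
  field_simp
  ring

lemma geom3_sum (n : ℕ) : ∑ i ∈ range n, (1 / 3 : ℝ) ^ i = (3 - 3 * (1 / 3 : ℝ) ^ n) / 2 := by
  rw [geom_sum_eq (by norm_num)]
  field_simp
  ring

lemma tsum_half : ∑' i : ℕ, (1 / 2 : ℝ) ^ i = 2 := by
  rw [tsum_geometric_of_lt_one (by norm_num) (by norm_num)]
  norm_num

lemma finVal_w0 (n : ℕ) : Aaut.finVal w0 n = ∑ i ∈ range n, (1 / 2 : ℝ) ^ i := by
  rw [Aaut_finVal]
  exact Finset.sum_congr rfl fun i _ => ap_w0 i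

lemma finVal_w1 (n : ℕ) : Aaut.finVal w1 n = ∑ i ∈ range n, (1 / 3 : ℝ) ^ i := by
  rw [Aaut_finVal]
  exact Finset.sum_congr rfl fun i _ => ap_w1 i

lemma infVal_w0 : Aaut.infVal w0 = 2 := by
  rw [Aaut_infVal, tsum_congr ap_w0, tsum_half]

lemma infVal_wk (k : ℕ) : Aaut.infVal (wk k) = 3 / 2 + (1 / 3 : ℝ) ^ k / 2 := by
  rw [Aaut_infVal, ← Summable.sum_add_tsum_nat_add k (summable_ap (wk k))]
  have h1 : ∑ i ∈ range k, ap (wk k) i = (3 - 3 * (1 / 3 : ℝ) ^ k) / 2 := by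
    rw [Finset.sum_congr rfl fun i hi => ap_wk_le (Finset.mem_range.1 hi).le, geom3_sum]
  have h2 : ∑' i : ℕ, ap (wk k) (i + k) = (1 / 3 : ℝ) ^ k * 2 := by
    rw [tsum_congr (ap_wk_add k), tsum_mul_left, tsum_half]
  rw [h1, h2]
  ring

lemma infVal_vk (k : ℕ) : Aaut.infVal (vk k) = 2 - (1 / 3 : ℝ) * (1 / 2 : ℝ) ^ k := by
  rw [Aaut_infVal, ← Summable.sum_add_tsum_nat_add (k + 1) (summable_ap (vk k))]
  have h1 : ∑ i ∈ range (k + 1), ap (vk k) i = 2 - 2 * (1 / 2 : ℝ) ^ (k + 1) := by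
    rw [Finset.sum_congr rfl fun i hi =>
      ap_vk_le (by have := Finset.mem_range.1 hi; omega : i ≤ k), geom2_sum]
  have h2 : ∑' i : ℕ, ap (vk k) (i + (k + 1)) = (1 / 3 : ℝ) * (1 / 2 : ℝ) ^ k * 2 := by
    have hterm : ∀ i : ℕ, ap (vk k) (i + (k + 1)) =
        ((1 / 3 : ℝ) * (1 / 2 : ℝ) ^ k) * (1 / 2 : ℝ) ^ i := fun i => by
      rw [ap_vk_add k i]; ring
    rw [tsum_congr hterm, tsum_mul_left, tsum_half]
  rw [h1, h2]
  ring

end LONMDA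

open LONMDA NMDA Finset

/-- There exists a letter-oriented integral NMDA over the two-letter alphabet `Fin 2`
(discount factor 2 on every transition over letter 0 and 3 on every transition over
letter 1) such that no integral NDA (NMDA with a constant integer discount factor ≥ 2)
is equivalent to it, with respect to nonempty finite words and to infinite words. -/
theorem letter_oriented_nmda_more_expressive_than_nda :
    ∃ (Q : Type) (_ : Fintype Q) (A : NMDA (Fin 2) Q),
      A.Integral ∧
        (∀ q q', A.delta q 0 q' → A.disc q 0 q' = 2) ∧
        (∀ q q', A.delta q 1 q' → A.disc q 1 q' = 3) ∧
        ∀ (l : ℕ), 2 ≤ l → ∀ (Q' : Type) (_ : Fintype Q') (B : NMDA (Fin 2) Q'),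
          B.ConstDisc (l : ℚ) →
            (¬ ∀ (w : ℕ → Fin 2) (n : ℕ), 0 < n → B.finVal w n = A.finVal w n) ∧
              ¬ ∀ w : ℕ → Fin 2, B.infVal w = A.infVal w := by
  classical
  refine ⟨Unit, inferInstance, Aaut, ?_, ?_, ?_, ?_⟩
  · rintro q a q' -
    by_cases ha : a = 0
    · exact ⟨2, by simp [Aaut, ha]⟩
    · exact ⟨3, by simp [Aaut, ha]⟩
  · rintro q q' -
    simp [Aaut]
  · rintro q q' -
    norm_num [Aaut]
  intro l hl Q' instQ' B hC
  -- bound on weights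
  obtain ⟨M0, hM0⟩ := Finite.exists_le fun t : Q' × Fin 2 × Q' => |(B.weight t.1 t.2.1 t.2.2 : ℝ)|
  set M : ℝ := max M0 0 with hMdef
  have hM : ∀ q a q', |(B.weight q a q' : ℝ)| ≤ M := fun q a q' =>
    (hM0 (q, a, q')).trans (le_max_left _ _)
  have hMnn : (0:ℝ) ≤ M := le_max_right _ _
  -- common denominator
  obtain ⟨nd, hnd⟩ := Finite.exists_le fun t : Q' × Fin 2 × Q' => (B.weight t.1 t.2.1 t.2.2).den
  set Dq : ℕ := Nat.factorial nd with hDqdef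
  have hDq : 0 < Dq := Nat.factorial_pos _
  have hDdvd : ∀ q a q', (B.weight q a q').den ∣ Dq := fun q a q' =>
    Nat.dvd_factorial (B.weight q a q').pos (hnd (q, a, q'))
  have hDqR : (0:ℝ) < (Dq : ℝ) := by exact_mod_cast hDq
  have hlR : (1:ℝ) < (l : ℝ) := by exact_mod_cast Nat.lt_of_lt_of_le one_lt_two hl
  have hlpos : (0:ℝ) < (1 / l : ℝ) := by positivity
  constructor
  · -- finite words
    intro h
    rcases Nat.lt_or_ge l 3 with hl3 | hl3
    · -- l = 2 : arithmetic on the word 1^n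
      have hl2 : l = 2 := by omega
      subst hl2
      set e := Dq + 1 with he
      have hBA := h w1 (e + 1) (by omega)
      rw [finVal_w1] at hBA
      obtain ⟨r, hr, hrv⟩ := B.finVal_mem w1 (e + 1)
      obtain ⟨z, hz⟩ := runVal_rat hl hC hDdvd (n := e) hr.2
      rw [← hrv, hBA, geom3_sum] at hz
      have hpow3 : (3:ℝ) ^ (e + 1) * (1 / 3 : ℝ) ^ (e + 1) = 1 := by
        rw [← mul_pow]; norm_num
      have hZeq : 2 * z * 3 ^ e = (Dq : ℤ) * 2 ^ e * (3 ^ (e + 1) - 1) := by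
        have hcast : ((2 * z * 3 ^ e : ℤ) : ℝ) = (((Dq : ℤ) * 2 ^ e * (3 ^ (e + 1) - 1) : ℤ) : ℝ) := by
          push_cast
          rw [hz]
          push_cast
          linear_combination (-(Dq:ℝ) * 2 ^ e) * hpow3
        exact_mod_cast hcast
      have h3e1 : 1 ≤ 3 ^ (e + 1) := Nat.one_le_pow _ _ (by norm_num)
      have hdvdZ : (3 : ℤ) ^ e ∣ (Dq : ℤ) * 2 ^ e * (3 ^ (e + 1) - 1) :=
        ⟨2 * z, by rw [← hZeq]; ring⟩
      have hdvdN : 3 ^ e ∣ Dq * 2 ^ e * (3 ^ (e + 1) - 1) := by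
        have hc : ((Dq * 2 ^ e * (3 ^ (e + 1) - 1) : ℕ) : ℤ) =
            (Dq : ℤ) * 2 ^ e * (3 ^ (e + 1) - 1) := by
          push_cast [h3e1]
          ring
        rw [← Int.natCast_dvd_natCast, hc]
        exact_mod_cast hdvdZ
      have hcop : Nat.Coprime (3 ^ e) (2 ^ e * (3 ^ (e + 1) - 1)) := by
        refine Nat.Coprime.pow_left _ (Nat.Coprime.mul_right ?_ ?_)
        · exact Nat.Coprime.pow_right _ (by decide)
        · rw [Nat.Prime.coprime_iff_not_dvd Nat.prime_three]
          intro hdvd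
          have h1 : (3:ℕ) ∣ 3 ^ (e + 1) := dvd_pow_self 3 (by omega)
          have h2 : (3:ℕ) ∣ 1 := by
            have := Nat.dvd_sub h1 hdvd
            rwa [Nat.sub_sub_self h3e1] at this
          norm_num at h2
      have hdvdD : 3 ^ e ∣ Dq := by
        refine hcop.dvd_of_dvd_mul_right ?_
        rwa [← mul_assoc]
      have hle : 3 ^ e ≤ Dq := Nat.le_of_dvd hDq hdvdD
      have hlt : Dq < 3 ^ e := by
        calc Dq < 3 ^ Dq := Nat.lt_pow_self (by norm_num : 1 < 3)
        _ ≤ 3 ^ e := Nat.pow_le_pow_right (by norm_num) (by omega)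
      omega
    · -- l ≥ 3 : growth on the word 0^n
      obtain ⟨n0, hn0⟩ := pow_unbounded_of_one_lt M (by norm_num : (1:ℝ) < 3/2)
      set n := n0 + 1 with hn
      have hMn : M < (3/2 : ℝ) ^ n := hn0.trans_le (pow_le_pow_right₀ (by norm_num) (by omega))
      obtain ⟨r, hr, hrv⟩ := B.finVal_mem w0 n
      set s := B.mkRun (fun i => w0 (i + n)) (r n) with hs
      have hglue : B.InfRun w0 (glue r s n) :=
        glue_infRun hr rfl (fun i => B.mkRun_step _ _ i)
      have hfr : B.FinRun w0 (n + 1) (glue r s n) := ⟨hglue.1, fun i _ => hglue.2 i⟩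
      have hle := B.finVal_le hfr
      have hsucc := runVal_succ_const hl hC (w := w0) (r := glue r s n) (n := n)
        (fun i _ => hglue.2 i)
      have hgr : B.runVal w0 (glue r s n) n = B.runVal w0 r n :=
        runVal_congr B (fun _ _ => rfl) (fun i hi => glue_le hi)
      have hwt : (B.weight (glue r s n n) (w0 n) (glue r s n (n + 1)) : ℝ) ≤ M :=
        (le_abs_self _).trans (hM _ _ _)
      have hA1 := h w0 n (by omega)
      have hA2 := h w0 (n + 1) (by omega)
      rw [finVal_w0] at hA1 hA2
      rw [Finset.sum_range_succ] at hA2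
      have hpow : (0:ℝ) < (1 / l : ℝ) ^ n := pow_pos hlpos n
      have hkey : (1/2 : ℝ) ^ n ≤ M * (1 / l : ℝ) ^ n := by
        have h1 : B.finVal w0 (n + 1) ≤ B.finVal w0 n + M * (1 / l : ℝ) ^ n := by
          calc B.finVal w0 (n + 1) ≤ B.runVal w0 (glue r s n) (n + 1) := hle
          _ = B.runVal w0 (glue r s n) n +
              (B.weight (glue r s n n) (w0 n) (glue r s n (n + 1)) : ℝ) * (1 / l : ℝ) ^ n := hsucc
          _ ≤ B.runVal w0 r n + M * (1 / l : ℝ) ^ n := by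
              rw [hgr]
              exact add_le_add_right (mul_le_mul_of_nonneg_right hwt hpow.le) _
          _ = B.finVal w0 n + M * (1 / l : ℝ) ^ n := by rw [hrv]
        rw [hA1, hA2] at h1
        linarith
      have hl3R : (3:ℝ) ≤ (l : ℝ) := by exact_mod_cast hl3
      have hstep : M * (1 / l : ℝ) ^ n < (3/2 : ℝ) ^ n * (1 / l : ℝ) ^ n :=
        mul_lt_mul_of_pos_right hMn hpow
      have hfin2 : (3/2 : ℝ) ^ n * (1 / l : ℝ) ^ n ≤ (1/2 : ℝ) ^ n := by
        rw [← mul_pow]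
        refine pow_le_pow_left₀ (by positivity) ?_ n
        rw [div_mul_div_comm]
        rw [div_le_div_iff₀ (by positivity) (by norm_num)]
        linarith
      linarith
  · -- infinite words
    intro h
    rcases Nat.lt_or_ge l 3 with hl3 | hl3
    · -- l = 2 : pigeonhole on the words 1^(k+1) 0^ω
      have hl2 : l = 2 := by omega
      subst hl2
      have key : ∀ k : ℕ, ∃ (q : Q') (z : ℤ),
          B.tailVal w0 q = 3 * 2 ^ k + (2/3 : ℝ) ^ (k + 1) / 2 - 2 * z / Dq := by
        intro k
        obtain ⟨r, hr, heq⟩ := infVal_decomp hl hC hM (wk (k + 1)) (k + 1)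
        rw [wk_shift (k + 1)] at heq
        obtain ⟨z, hz⟩ := runVal_rat hl hC hDdvd (n := k) hr.2
        refine ⟨r (k + 1), z, ?_⟩
        rw [h (wk (k + 1)), infVal_wk] at heq
        push_cast at heq hz
        set V := B.tailVal w0 (r (k + 1)) with hV
        set Rv := B.runVal (wk (k + 1)) r (k + 1) with hRv
        have e1 : (2:ℝ) ^ (k + 1) * ((1/2 : ℝ) ^ (k + 1) * V) = V := by
          rw [← mul_assoc, ← mul_pow]
          norm_num
        have e2 : (2:ℝ) ^ (k + 1) * ((1/3 : ℝ) ^ (k + 1) / 2) = (2/3 : ℝ) ^ (k + 1) / 2 := by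
          rw [← mul_div_assoc, ← mul_pow]
          norm_num
        have hDne : (Dq : ℝ) ≠ 0 := hDqR.ne'
        have e3 : (2:ℝ) ^ (k + 1) * Rv = 2 * z / Dq := by
          rw [pow_succ, eq_div_iff hDne]
          linear_combination (-2 : ℝ) * hz
        have e4 : (2:ℝ) ^ (k + 1) * (3/2) = 3 * 2 ^ k := by
          rw [pow_succ]; ring
        have hmul := congrArg (fun t => (2:ℝ) ^ (k + 1) * t) heq
        simp only [mul_add] at hmul
        rw [e1, e2, e3, e4] at hmul
        linarith
      choose f zf hkey using key
      obtain ⟨N0, hN0⟩ := pow_unbounded_of_one_lt (Dq : ℝ) (by norm_num : (1:ℝ) < 3/2)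
      have hpair : ∀ a b : ℕ, N0 ≤ a → a < b → f a = f b → False := by
        intro a b hNa hab hfeq
        have va := hkey a
        have vb := hkey b
        rw [hfeq] at va
        set Ya := (2/3 : ℝ) ^ (a + 1) with hYa
        set Yb := (2/3 : ℝ) ^ (b + 1) with hYb
        have hDne : (Dq : ℝ) ≠ 0 := hDqR.ne'
        set m : ℤ := 3 * Dq * 2 ^ b - 3 * Dq * 2 ^ a + 2 * zf a - 2 * zf b with hm
        have hmR : (m : ℝ) = Dq * (Ya / 2 - Yb / 2) := by
          push_cast [hm]
          field_simp at va vb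
          linear_combination (va - vb) / 2
        have hYab : Yb < Ya :=
          pow_lt_pow_right_of_lt_one₀ (by norm_num) (by norm_num) (by omega)
        have hYbpos : 0 < Yb := by positivity
        have hYaN : Ya ≤ (2/3 : ℝ) ^ N0 :=
          pow_le_pow_of_le_one (by norm_num) (by norm_num) (by omega)
        have hNDq : (2/3 : ℝ) ^ N0 < 1 / Dq := by
          have h1 : (2/3 : ℝ) ^ N0 = 1 / (3/2 : ℝ) ^ N0 := by
            rw [one_div, ← inv_pow]
            norm_num
          rw [h1]
          exact one_div_lt_one_div_of_lt hDqR hN0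
        have hlow : (0:ℝ) < (m : ℝ) := by
          rw [hmR]
          have : 0 < Ya / 2 - Yb / 2 := by linarith
          positivity
        have hhigh : (m : ℝ) < 1 := by
          rw [hmR]
          have h2 : Ya / 2 - Yb / 2 < 1 / Dq := by
            have : Ya < 1 / Dq := lt_of_le_of_lt hYaN hNDq
            linarith
          have h3 : (Dq : ℝ) * (Ya / 2 - Yb / 2) < Dq * (1 / Dq) :=
            mul_lt_mul_of_pos_left h2 hDqR
          rwa [mul_one_div, div_self hDne] at h3
        have hZ1 : (0:ℤ) < m := by exact_mod_cast hlow
        have hZ2 : m < 1 := by exact_mod_cast hhigh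
        omega
      obtain ⟨j1, j2, hj12, hfj⟩ :=
        Finite.exists_ne_map_eq_of_infinite (fun k : ℕ => f (N0 + k))
      rcases lt_trichotomy j1 j2 with hlt | heq' | hgt
      · exact hpair (N0 + j1) (N0 + j2) (by omega) (by omega) hfj
      · exact hj12 heq'
      · exact hpair (N0 + j2) (N0 + j1) (by omega) (by omega) hfj.symm
    · -- l ≥ 3 : continuity on the words 0^k 1 0^ω
      obtain ⟨k, hk⟩ := pow_unbounded_of_one_lt (9 * M) (by norm_num : (1:ℝ) < 3/2)
      set C := M * (1 - 1 / (l:ℝ))⁻¹ with hCdef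
      have hil1 : (1 / (l:ℝ)) < 1 := inv_l_lt_one hl
      have hil3 : (1 / (l:ℝ)) ≤ 1 / 3 := by
        have h3 : (3:ℝ) ≤ (l:ℝ) := by exact_mod_cast hl3
        exact one_div_le_one_div_of_le (by norm_num) h3
      have hCnn : 0 ≤ C := by
        apply mul_nonneg hMnn
        rw [inv_nonneg]
        linarith
      have hCle : C ≤ 3 / 2 * M := by
        rw [hCdef]
        have h1 : (2/3 : ℝ) ≤ 1 - 1 / l := by linarith
        have h2 : (1 - 1 / (l:ℝ))⁻¹ ≤ (2/3 : ℝ)⁻¹ := by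
          apply inv_anti₀ (by norm_num) h1
        calc M * (1 - 1 / (l:ℝ))⁻¹ ≤ M * (2/3 : ℝ)⁻¹ := by
              exact mul_le_mul_of_nonneg_left h2 hMnn
        _ = 3 / 2 * M := by norm_num; ring
      have hagree : ∀ i < k, w0 i = vk k i := by
        intro i hi
        simp only [w0, vk]
        rw [if_neg (by omega)]
      obtain ⟨r, hr, hveq⟩ := infVal_decomp hl hC hM (vk k) k
      have hru : B.FinRun w0 k r := by
        refine ⟨hr.1, fun i hi => ?_⟩
        rw [show w0 i = vk k i from hagree i hi]
        exact hr.2 i hi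
      set s := B.mkRun (fun i => w0 (i + k)) (r k) with hsdef
      have hglue : B.InfRun w0 (glue r s k) :=
        glue_infRun hru rfl (fun i => B.mkRun_step _ _ i)
      have hsplit := infRunVal_split hl hC hM hglue.2 k
      have hshift : (fun i => glue r s k (i + k)) = s := funext fun i => glue_shift (show s 0 = r k from rfl) i
      have hpre : B.runVal w0 (glue r s k) k = B.runVal (vk k) r k :=
        runVal_congr B hagree (fun i hi => glue_le hi)
      rw [hshift, hpre] at hsplit
      have hsbound := abs_infRunVal_le hl hC hM (w := fun i => w0 (i + k)) (r := s)
        (fun i => B.mkRun_step _ _ i)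
      have htv := neg_le_tailVal hl hC hM (fun i => vk k (i + k)) (r k)
      have hpowpos : (0:ℝ) < (1 / l : ℝ) ^ k := pow_pos hlpos k
      have h1 : B.infVal w0 ≤ B.runVal (vk k) r k + (1 / l : ℝ) ^ k * C := by
        refine (csInf_le (infVal_set_bddBelow hl hC hM w0) ⟨glue r s k, hglue, rfl⟩).trans ?_
        rw [hsplit]
        have h2 := (abs_le.1 hsbound).2
        nlinarith
      have h2 : B.runVal (vk k) r k ≤ B.infVal (vk k) + (1 / l : ℝ) ^ k * C := by
        rw [hveq]
        nlinarith
      have hA0 : B.infVal w0 = 2 := by rw [h w0, infVal_w0]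
      have hAv : B.infVal (vk k) = 2 - (1/3 : ℝ) * (1/2 : ℝ) ^ k := by
        rw [h (vk k), infVal_vk]
      rw [hA0] at h1
      rw [hAv] at h2
      -- 2 ≤ 2 - (1/3)(1/2)^k + 2 C (1/l)^k
      have hmain : (1/3 : ℝ) * (1/2 : ℝ) ^ k ≤ 2 * C * (1 / l : ℝ) ^ k := by linarith
      have hpl : (1 / l : ℝ) ^ k ≤ (1/3 : ℝ) ^ k :=
        pow_le_pow_left₀ hlpos.le hil3 k
      have hfin1 : (1/2 : ℝ) ^ k ≤ 9 * M * (1/3 : ℝ) ^ k := by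
        have hc1 : 2 * C * (1 / l : ℝ) ^ k ≤ 3 * M * (1 / l : ℝ) ^ k :=
          mul_le_mul_of_nonneg_right (by linarith) hpowpos.le
        have hc2 : 3 * M * (1 / l : ℝ) ^ k ≤ 3 * M * (1/3 : ℝ) ^ k :=
          mul_le_mul_of_nonneg_left hpl (by linarith)
        linarith
      have hfin2 : 9 * M * (1/3 : ℝ) ^ k < (3/2 : ℝ) ^ k * (1/3 : ℝ) ^ k :=
        mul_lt_mul_of_pos_right hk (by positivity)
      have hfin3 : (3/2 : ℝ) ^ k * (1/3 : ℝ) ^ k = (1/2 : ℝ) ^ k := by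
        rw [← mul_pow]
        norm_num
      linarith
end

section
/- There exists a time-oriented integral NMDA A (one in which every transition taken at an odd position of a run has discount factor 2 and every transition taken at an even position has discount factor 3) such that no integral NDA is equivalent to A, with respect to both nonempty finite words and infinite words. -/
namespace Sep
open Finset
open Fin.NatCast

/-- discount at position `j` of a run of `A` -/
noncomputable def d (j : ℕ) : ℝ := if j % 2 = 0 then (2:ℝ) else 3

lemma d_pos (j : ℕ) : 0 < d j := by unfold d; split <;> norm_num

/-- accumulated discount factor -/
noncomputable def P (i : ℕ) : ℝ := ∏ j ∈ Finset.range i, (d j)⁻¹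

lemma P_pos (i : ℕ) : 0 < P i :=
  Finset.prod_pos (fun j _ => inv_pos.2 (d_pos j))

lemma P_two_mul (k : ℕ) : P (2*k) = (6:ℝ)⁻¹ ^ k := by
  induction k with
  | zero => simp [P]
  | succ k ih =>
    have h : 2*(k+1) = (2*k) + 1 + 1 := by ring
    rw [h, P, Finset.prod_range_succ, Finset.prod_range_succ, ← P, ih]
    have h1 : (2*k) % 2 = 0 := by omega
    have h2 : (2*k+1) % 2 = 1 := by omega
    rw [d, d, if_pos h1, if_neg (by omega)]
    rw [pow_succ]
    norm_num
    ring

def Aaut : NMDA (Fin 2) (Fin 2) where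
  init := {0}
  init_nonempty := ⟨0, rfl⟩
  delta q _ q' := q' = q + 1
  complete q _ := ⟨q + 1, rfl⟩
  weight _ a _ := ((a : ℕ) : ℚ)
  disc q _ _ := if q = 0 then 2 else 3
  disc_gt_one := fun q a q' _ => by split <;> norm_num

lemma Aaut_disc (q a q') : Aaut.disc q a q' = if q = 0 then 2 else 3 := rfl
lemma Aaut_weight (q) (a : Fin 2) (q') : Aaut.weight q a q' = ((a : ℕ) : ℚ) := rfl

lemma cast_eq_zero_iff (j : ℕ) : ((j : Fin 2) = 0) ↔ (j % 2 = 0) := by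
  rw [Fin.ext_iff]
  simp [Fin.val_natCast]

lemma Aaut_disc_run (j : ℕ) (a : Fin 2) (q') :
    ((Aaut.disc (j : Fin 2) a q' : ℚ) : ℝ) = d j := by
  rw [Aaut_disc, d]
  by_cases h : j % 2 = 0
  · rw [if_pos ((cast_eq_zero_iff j).2 h), if_pos h]; norm_num
  · rw [if_neg (fun hh => h ((cast_eq_zero_iff j).1 hh)), if_neg h]; norm_num

lemma Aaut_finrun_eq {w : ℕ → Fin 2} {n : ℕ} {r : ℕ → Fin 2} (h : Aaut.FinRun w n r) :
    ∀ i, i ≤ n → r i = (i : Fin 2) := by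
  intro i
  induction i with
  | zero => intro _; simpa [Aaut] using h.1
  | succ i ih =>
    intro hi
    have hd := h.2 i (by omega)
    change r (i+1) = r i + 1 at hd
    rw [hd, ih (by omega)]
    push_cast
    ring

lemma Aaut_infrun_eq {w : ℕ → Fin 2} {r : ℕ → Fin 2} (h : Aaut.InfRun w r) :
    ∀ i, r i = (i : Fin 2) := by
  intro i
  induction i with
  | zero => simpa [Aaut] using h.1
  | succ i ih =>
    have hd := h.2 i
    change r (i+1) = r i + 1 at hd
    rw [hd, ih]
    push_cast
    ring

/-- canonical run of A -/
def rA : ℕ → Fin 2 := fun i => (i : Fin 2)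

lemma rA_finrun (w : ℕ → Fin 2) (n : ℕ) : Aaut.FinRun w n rA :=
  ⟨by simp [rA, Aaut], fun i _ => by show rA (i+1) = rA i + 1; simp [rA]⟩

lemma rA_infrun (w : ℕ → Fin 2) : Aaut.InfRun w rA :=
  ⟨by simp [rA, Aaut], fun i => by show rA (i+1) = rA i + 1; simp [rA]⟩

lemma Aaut_runVal {w : ℕ → Fin 2} {n : ℕ} {r : ℕ → Fin 2} (h : Aaut.FinRun w n r) :
    Aaut.runVal w r n = ∑ i ∈ Finset.range n, ((w i : ℕ) : ℝ) * P i := by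
  unfold NMDA.runVal
  apply Finset.sum_congr rfl
  intro i hi
  rw [Finset.mem_range] at hi
  congr 1
  unfold P
  apply Finset.prod_congr rfl
  intro j hj
  rw [Finset.mem_range] at hj
  rw [Aaut_finrun_eq h j (by omega), Aaut_disc_run, one_div]

lemma Aaut_infRunVal {w : ℕ → Fin 2} {r : ℕ → Fin 2} (h : Aaut.InfRun w r) :
    Aaut.infRunVal w r = ∑' i : ℕ, ((w i : ℕ) : ℝ) * P i := by
  unfold NMDA.infRunVal
  apply tsum_congr
  intro i
  congr 1
  unfold P
  apply Finset.prod_congr rfl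
  intro j hj
  rw [Aaut_infrun_eq h j, Aaut_disc_run, one_div]

lemma Aaut_finVal (w : ℕ → Fin 2) (n : ℕ) :
    Aaut.finVal w n = ∑ i ∈ Finset.range n, ((w i : ℕ) : ℝ) * P i := by
  unfold NMDA.finVal
  have hset : { x : ℝ | ∃ r : ℕ → Fin 2, Aaut.FinRun w n r ∧ x = Aaut.runVal w r n }
      = {∑ i ∈ Finset.range n, ((w i : ℕ) : ℝ) * P i} := by
    ext x
    constructor
    · rintro ⟨r, hr, rfl⟩
      exact Aaut_runVal hr
    · rintro rfl
      exact ⟨rA, rA_finrun w n, (Aaut_runVal (rA_finrun w n)).symm⟩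
  rw [hset, csInf_singleton]

lemma Aaut_infVal (w : ℕ → Fin 2) :
    Aaut.infVal w = ∑' i : ℕ, ((w i : ℕ) : ℝ) * P i := by
  unfold NMDA.infVal
  have hset : { x : ℝ | ∃ r : ℕ → Fin 2, Aaut.InfRun w r ∧ x = Aaut.infRunVal w r }
      = {∑' i : ℕ, ((w i : ℕ) : ℝ) * P i} := by
    ext x
    constructor
    · rintro ⟨r, hr, rfl⟩
      exact Aaut_infRunVal hr
    · rintro rfl
      exact ⟨rA, rA_infrun w, (Aaut_infRunVal (rA_infrun w)).symm⟩
  rw [hset, csInf_singleton]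

/-- the word 0^(2k) 1 0^ω -/
def wk (k : ℕ) : ℕ → Fin 2 := fun i => if i = 2*k then 1 else 0

/-- the all-zero word -/
def zw : ℕ → Fin 2 := fun _ => 0

lemma Aaut_finVal_wk (k : ℕ) : Aaut.finVal (wk k) (2*k+1) = (6:ℝ)⁻¹ ^ k := by
  rw [Aaut_finVal, ← P_two_mul]
  rw [Finset.sum_eq_single (2*k)]
  · simp [wk]
  · intro i _ hne
    simp [wk, hne]
  · intro h
    exact absurd (Finset.mem_range.2 (by omega)) h

lemma Aaut_finVal_zw (n : ℕ) : Aaut.finVal zw n = 0 := by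
  rw [Aaut_finVal]
  apply Finset.sum_eq_zero
  intro i _
  simp [zw]

lemma Aaut_infVal_wk (k : ℕ) : Aaut.infVal (wk k) = (6:ℝ)⁻¹ ^ k := by
  rw [Aaut_infVal, ← P_two_mul]
  rw [tsum_eq_single (2*k)]
  · simp [wk]
  · intro i hne
    simp [wk, hne]

lemma Aaut_infVal_zw : Aaut.infVal zw = 0 := by
  rw [Aaut_infVal]
  convert tsum_zero with i
  simp [zw]

end Sep

namespace Sep
open Finset

section Bside
variable {Q' : Type} (B : NMDA (Fin 2) Q')

/-- word/run shift -/
def shf {X : Type} (n : ℕ) (f : ℕ → X) : ℕ → X := fun i => f (n + i)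

/-- re-initialized automaton -/
def reInit (q : Q') : NMDA (Fin 2) Q' :=
  { B with init := {q}, init_nonempty := ⟨q, rfl⟩ }

@[simp] lemma reInit_weight (q) : (reInit B q).weight = B.weight := rfl
@[simp] lemma reInit_disc (q) : (reInit B q).disc = B.disc := rfl
@[simp] lemma reInit_delta (q) : (reInit B q).delta = B.delta := rfl
@[simp] lemma reInit_init (q) : (reInit B q).init = {q} := rfl
@[simp] lemma reInit_runVal (q w r n) : (reInit B q).runVal w r n = B.runVal w r n := rfl
@[simp] lemma reInit_infRunVal (q w r) : (reInit B q).infRunVal w r = B.infRunVal w r := rfl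

noncomputable def extFrom (w : ℕ → Fin 2) (q : Q') : ℕ → Q'
  | 0 => q
  | i+1 => Classical.choose (B.complete (extFrom w q i) (w i))

@[simp] lemma extFrom_zero (w q) : extFrom B w q 0 = q := rfl

lemma extFrom_delta (w q) (i : ℕ) :
    B.delta (extFrom B w q i) (w i) (extFrom B w q (i+1)) :=
  Classical.choose_spec (B.complete (extFrom B w q i) (w i))

lemma runVal_congr {w w' : ℕ → Fin 2} {r r' : ℕ → Q'} {n : ℕ}
    (hw : ∀ i < n, w i = w' i) (hr : ∀ i ≤ n, r i = r' i) :
    B.runVal w r n = B.runVal w' r' n := by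
  unfold NMDA.runVal
  apply Finset.sum_congr rfl
  intro i hi
  rw [Finset.mem_range] at hi
  congr 1
  · rw [hw i hi, hr i (by omega), hr (i+1) (by omega)]
  · apply Finset.prod_congr rfl
    intro j hj
    rw [Finset.mem_range] at hj
    rw [hw j (by omega), hr j (by omega), hr (j+1) (by omega)]

lemma finRun_congr {w w' : ℕ → Fin 2} {r : ℕ → Q'} {n : ℕ}
    (hw : ∀ i < n, w i = w' i) (h : B.FinRun w n r) : B.FinRun w' n r :=
  ⟨h.1, fun i hi => by rw [← hw i hi]; exact h.2 i hi⟩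

lemma runvals_finite [Fintype Q'] (w : ℕ → Fin 2) (n : ℕ) :
    Set.Finite { x : ℝ | ∃ r : ℕ → Q', x = B.runVal w r n } := by
  apply Set.Finite.subset (Set.finite_range
    (fun f : Fin (n+1) → Q' => B.runVal w (fun i => f ⟨min i n, by omega⟩) n))
  rintro x ⟨r, rfl⟩
  refine ⟨fun j => r j.val, ?_⟩
  exact (runVal_congr B (fun _ _ => rfl) (fun i hi => by simp [min_eq_left hi])).symm

lemma finRun_exists (w : ℕ → Fin 2) (n : ℕ) : ∃ r, B.FinRun w n r := by
  obtain ⟨q0, hq0⟩ := B.init_nonempty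
  exact ⟨extFrom B w q0, hq0, fun i _ => extFrom_delta B w q0 i⟩

lemma infRun_exists (w : ℕ → Fin 2) : ∃ r, B.InfRun w r := by
  obtain ⟨q0, hq0⟩ := B.init_nonempty
  exact ⟨extFrom B w q0, hq0, fun i => extFrom_delta B w q0 i⟩

lemma finVal_mem [Fintype Q'] (w : ℕ → Fin 2) (n : ℕ) :
    ∃ r, B.FinRun w n r ∧ B.finVal w n = B.runVal w r n := by
  have hne : {x : ℝ | ∃ r, B.FinRun w n r ∧ x = B.runVal w r n}.Nonempty := by
    obtain ⟨r, hr⟩ := finRun_exists B w n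
    exact ⟨_, r, hr, rfl⟩
  have hfin : {x : ℝ | ∃ r, B.FinRun w n r ∧ x = B.runVal w r n}.Finite :=
    (runvals_finite B w n).subset (by rintro x ⟨r, _, rfl⟩; exact ⟨r, rfl⟩)
  obtain ⟨r, hr, hx⟩ := hne.csInf_mem hfin
  exact ⟨r, hr, hx⟩

lemma finVal_le [Fintype Q'] {w : ℕ → Fin 2} {n : ℕ} {r : ℕ → Q'}
    (hr : B.FinRun w n r) : B.finVal w n ≤ B.runVal w r n := by
  have hfin : {x : ℝ | ∃ r, B.FinRun w n r ∧ x = B.runVal w r n}.Finite :=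
    (runvals_finite B w n).subset (by rintro x ⟨r, _, rfl⟩; exact ⟨r, rfl⟩)
  exact csInf_le hfin.bddBelow ⟨r, hr, rfl⟩

lemma weight_bound [Fintype Q'] :
    ∃ W : ℝ, 0 ≤ W ∧ ∀ q a q', |(B.weight q a q' : ℝ)| ≤ W := by
  have : Nonempty Q' := ⟨B.init_nonempty.choose⟩
  obtain ⟨W0, hW0⟩ :=
    Finite.exists_le (fun t : Q' × Fin 2 × Q' => |(B.weight t.1 t.2.1 t.2.2 : ℝ)|)
  exact ⟨max W0 0, le_max_right _ _,
    fun q a q' => le_trans (hW0 (q, a, q')) (le_max_left _ _)⟩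

section Const
variable {l : ℕ} (hl : 2 ≤ l) (hB : B.ConstDisc (l : ℚ))

include hl in
lemma linv_le : ((l:ℝ))⁻¹ ≤ 1/2 := by
  have h2 : (2:ℝ) ≤ (l:ℝ) := by exact_mod_cast hl
  have := inv_anti₀ (by norm_num : (0:ℝ) < 2) h2
  linarith

include hl in
lemma lpos : (0:ℝ) < (l:ℝ) := by exact_mod_cast (by omega : 0 < l)

include hB in
lemma prod_disc {w : ℕ → Fin 2} {r : ℕ → Q'} {n : ℕ}
    (hr : ∀ i < n, B.delta (r i) (w i) (r (i+1))) {i : ℕ} (hi : i ≤ n) :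
    ∏ j ∈ Finset.range i, (1 / (B.disc (r j) (w j) (r (j+1)) : ℝ)) = ((l:ℝ)⁻¹)^i := by
  calc ∏ j ∈ Finset.range i, (1 / (B.disc (r j) (w j) (r (j+1)) : ℝ))
      = ∏ _j ∈ Finset.range i, ((l:ℝ))⁻¹ := by
        apply Finset.prod_congr rfl
        intro j hj
        rw [Finset.mem_range] at hj
        rw [hB _ _ _ (hr j (by omega))]
        push_cast
        rw [one_div]
    _ = ((l:ℝ)⁻¹)^i := by rw [Finset.prod_const, Finset.card_range]

include hB in
lemma runVal_eq {w : ℕ → Fin 2} {r : ℕ → Q'} {n : ℕ}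
    (hr : ∀ i < n, B.delta (r i) (w i) (r (i+1))) :
    B.runVal w r n
      = ∑ i ∈ Finset.range n, (B.weight (r i) (w i) (r (i+1)) : ℝ) * ((l:ℝ)⁻¹)^i := by
  apply Finset.sum_congr rfl
  intro i hi
  rw [Finset.mem_range] at hi
  rw [prod_disc B hB hr (le_of_lt hi)]

include hB in
lemma infRunVal_eq {w : ℕ → Fin 2} {r : ℕ → Q'}
    (hr : ∀ i, B.delta (r i) (w i) (r (i+1))) :
    B.infRunVal w r
      = ∑' i : ℕ, (B.weight (r i) (w i) (r (i+1)) : ℝ) * ((l:ℝ)⁻¹)^i := by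
  apply tsum_congr
  intro i
  rw [prod_disc B hB (n := i+1) (fun j hj => hr j) (by omega)]

end Const
end Bside
end Sep

namespace Sep
open Finset

section Bside2
variable {Q' : Type} (B : NMDA (Fin 2) Q') {l : ℕ} (hl : 2 ≤ l) (hB : B.ConstDisc (l : ℚ))
  {W : ℝ} (hW : ∀ q a q', |(B.weight q a q' : ℝ)| ≤ W)

include hl in
lemma geom_summable (c : ℝ) : Summable (fun i : ℕ => c * ((l:ℝ)⁻¹)^i) := by
  apply Summable.mul_left
  apply summable_geometric_of_lt_one (by positivity)
  have := linv_le hl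
  linarith

include hl hW in
lemma norm_summable {w : ℕ → Fin 2} {r : ℕ → Q'} :
    Summable (fun i : ℕ => ‖(B.weight (r i) (w i) (r (i+1)) : ℝ) * ((l:ℝ)⁻¹)^i‖) := by
  apply Summable.of_nonneg_of_le (fun i => norm_nonneg _) _ (geom_summable hl W)
  intro i
  rw [norm_mul, norm_pow, Real.norm_eq_abs, Real.norm_eq_abs,
    abs_of_nonneg (by positivity : (0:ℝ) ≤ (l:ℝ)⁻¹)]
  exact mul_le_mul_of_nonneg_right (hW _ _ _) (by positivity)

include hl hW in
lemma terms_summable {w : ℕ → Fin 2} {r : ℕ → Q'} :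
    Summable (fun i : ℕ => (B.weight (r i) (w i) (r (i+1)) : ℝ) * ((l:ℝ)⁻¹)^i) :=
  Summable.of_norm (norm_summable B hl hW)

include hl hW in
lemma tsum_terms_abs_le {w : ℕ → Fin 2} {r : ℕ → Q'} (hW0 : 0 ≤ W) :
    |∑' i : ℕ, (B.weight (r i) (w i) (r (i+1)) : ℝ) * ((l:ℝ)⁻¹)^i| ≤ 2*W := by
  have h1 : |∑' i : ℕ, (B.weight (r i) (w i) (r (i+1)) : ℝ) * ((l:ℝ)⁻¹)^i|
      ≤ ∑' i : ℕ, ‖(B.weight (r i) (w i) (r (i+1)) : ℝ) * ((l:ℝ)⁻¹)^i‖ := by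
    rw [← Real.norm_eq_abs]
    exact norm_tsum_le_tsum_norm (norm_summable B hl hW)
  have h2 : ∑' i : ℕ, ‖(B.weight (r i) (w i) (r (i+1)) : ℝ) * ((l:ℝ)⁻¹)^i‖
      ≤ ∑' i : ℕ, W * ((l:ℝ)⁻¹)^i := by
    apply Summable.tsum_le_tsum _ (norm_summable B hl hW) (geom_summable hl W)
    intro i
    rw [norm_mul, norm_pow, Real.norm_eq_abs, Real.norm_eq_abs,
      abs_of_nonneg (by positivity : (0:ℝ) ≤ (l:ℝ)⁻¹)]
    exact mul_le_mul_of_nonneg_right (hW _ _ _) (by positivity)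
  have hlt : (l:ℝ)⁻¹ < 1 := lt_of_le_of_lt (linv_le hl) (by norm_num)
  have h3 : ∑' i : ℕ, W * ((l:ℝ)⁻¹)^i = W * (1 - (l:ℝ)⁻¹)⁻¹ := by
    rw [tsum_mul_left, tsum_geometric_of_lt_one (by positivity) hlt]
  have h4 : (1 - (l:ℝ)⁻¹)⁻¹ ≤ 2 := by
    have := linv_le hl
    have h5 : (1:ℝ)/2 ≤ 1 - (l:ℝ)⁻¹ := by linarith
    calc (1 - (l:ℝ)⁻¹)⁻¹ ≤ ((1:ℝ)/2)⁻¹ := inv_anti₀ (by norm_num) h5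
      _ = 2 := by norm_num
  have h6 : W * (1 - (l:ℝ)⁻¹)⁻¹ ≤ W * 2 := mul_le_mul_of_nonneg_left h4 hW0
  linarith

include hl hB hW in
lemma infRunVal_abs_le {w : ℕ → Fin 2} {r : ℕ → Q'} (hW0 : 0 ≤ W)
    (hr : ∀ i, B.delta (r i) (w i) (r (i+1))) :
    |B.infRunVal w r| ≤ 2*W := by
  rw [infRunVal_eq B hB hr]
  exact tsum_terms_abs_le B hl hW hW0

include hl hB hW in
lemma infRunVal_split {w : ℕ → Fin 2} {r : ℕ → Q'}
    (hr : ∀ i, B.delta (r i) (w i) (r (i+1))) (n : ℕ) :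
    B.infRunVal w r = B.runVal w r n + ((l:ℝ)⁻¹)^n * B.infRunVal (shf n w) (shf n r) := by
  have hr' : ∀ i, B.delta (shf n r i) (shf n w i) (shf n r (i+1)) := by
    intro i
    exact hr (n+i)
  rw [infRunVal_eq B hB hr, infRunVal_eq B hB hr', runVal_eq B hB (fun i _ => hr i)]
  rw [← Summable.sum_add_tsum_nat_add n (terms_summable B hl hW)]
  congr 1
  rw [← tsum_mul_left]
  apply tsum_congr
  intro i
  simp only [shf, Nat.add_succ]
  rw [add_comm i n, pow_add]
  ring

include hl hB in
lemma runVal_lattice {D : ℕ} (hD : ∀ q a q', ∃ z : ℤ, (D:ℚ) * B.weight q a q' = (z:ℚ))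
    {w : ℕ → Fin 2} {r : ℕ → Q'} {m : ℕ}
    (hr : ∀ i < m+1, B.delta (r i) (w i) (r (i+1))) :
    ∃ z : ℤ, (D:ℝ) * (l:ℝ)^m * B.runVal w r (m+1) = (z:ℝ) := by
  rw [runVal_eq B hB hr]
  choose zf hzf using fun i => hD (r i) (w i) (r (i+1))
  refine ⟨∑ i ∈ Finset.range (m+1), zf i * (l:ℤ)^(m-i), ?_⟩
  rw [Finset.mul_sum]
  push_cast
  apply Finset.sum_congr rfl
  intro i hi
  rw [Finset.mem_range] at hi
  have hl0 : (l:ℝ) ≠ 0 := ne_of_gt (lpos hl)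
  have hzi : (D:ℝ) * (B.weight (r i) (w i) (r (i+1)) : ℝ) = (zf i : ℝ) := by
    exact_mod_cast congrArg (fun q : ℚ => (q:ℝ)) (hzf i)
  have h2 : (l:ℝ)^(m-i) * (l:ℝ)^i = (l:ℝ)^m := pow_sub_mul_pow _ (by omega)
  have hli : (l:ℝ)^i ≠ 0 := pow_ne_zero _ hl0
  have hpow : (l:ℝ)^m * ((l:ℝ)⁻¹)^i = (l:ℝ)^(m-i) := by
    rw [inv_pow, ← h2, mul_inv_cancel_right₀ hli]
  calc (D:ℝ) * (l:ℝ)^m * ((B.weight (r i) (w i) (r (i+1)) : ℝ) * ((l:ℝ)⁻¹)^i)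
      = ((D:ℝ) * (B.weight (r i) (w i) (r (i+1)) : ℝ)) * ((l:ℝ)^m * ((l:ℝ)⁻¹)^i) := by ring
    _ = (zf i : ℝ) * (l:ℝ)^(m-i) := by rw [hzi, hpow]

include hl hB in
lemma finVal_lattice [Fintype Q'] {D : ℕ}
    (hD : ∀ q a q', ∃ z : ℤ, (D:ℚ) * B.weight q a q' = (z:ℚ))
    (w : ℕ → Fin 2) (m : ℕ) :
    ∃ z : ℤ, (D:ℝ) * (l:ℝ)^m * B.finVal w (m+1) = (z:ℝ) := by
  obtain ⟨r, hr, hv⟩ := finVal_mem B w (m+1)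
  rw [hv]
  exact runVal_lattice B hl hB hD hr.2

lemma den_bound [Fintype Q'] :
    ∃ D : ℕ, 1 ≤ D ∧ ∀ q a q', ∃ z : ℤ, (D:ℚ) * B.weight q a q' = (z:ℚ) := by
  classical
  refine ⟨∏ t : Q' × Fin 2 × Q', (B.weight t.1 t.2.1 t.2.2).den, ?_, ?_⟩
  · rw [Nat.one_le_iff_ne_zero]
    rw [Finset.prod_ne_zero_iff]
    intro t _
    exact (B.weight t.1 t.2.1 t.2.2).den_nz
  · intro q a q'
    have hdvd : (B.weight q a q').den ∣ ∏ t : Q' × Fin 2 × Q', (B.weight t.1 t.2.1 t.2.2).den :=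
      Finset.dvd_prod_of_mem _ (Finset.mem_univ (q, a, q'))
    obtain ⟨m, hm⟩ := hdvd
    refine ⟨(m : ℤ) * (B.weight q a q').num, ?_⟩
    rw [hm]
    have h := Rat.mul_den_eq_num (B.weight q a q')
    push_cast
    linear_combination (m : ℚ) * h

include hl hB hW in
lemma finVal_agree_le [Fintype Q'] {w w' : ℕ → Fin 2} {n : ℕ}
    (hag : ∀ i < n, w i = w' i) :
    B.finVal w (n+1) ≤ B.finVal w' (n+1) + 2*W*((l:ℝ)⁻¹)^n := by
  obtain ⟨r, hr, hv⟩ := finVal_mem B w' (n+1)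
  obtain ⟨q2, hq2⟩ := B.complete (r n) (w n)
  set r' : ℕ → Q' := fun i => if i = n+1 then q2 else r i with hr'def
  have hrr : ∀ i ≤ n, r' i = r i := by
    intro i hi
    simp only [hr'def]
    rw [if_neg (by omega)]
  have hfr' : B.FinRun w (n+1) r' := by
    constructor
    · rw [hrr 0 (by omega)]
      exact hr.1
    · intro i hi
      rcases Nat.lt_or_ge i n with h | h
      · rw [hrr i (by omega), hrr (i+1) (by omega), hag i h]
        exact hr.2 i (by omega)
      · have hin : i = n := by omega
        subst hin
        rw [hrr i le_rfl]
        have : r' (i+1) = q2 := by simp [hr'def]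
        rw [this]
        exact hq2
  have hle := finVal_le B hfr'
  have hval : B.runVal w r' (n+1) ≤ B.runVal w' r (n+1) + 2*W*((l:ℝ)⁻¹)^n := by
    rw [runVal_eq B hB hfr'.2, runVal_eq B hB hr.2]
    rw [Finset.sum_range_succ, Finset.sum_range_succ]
    have hsame : ∑ i ∈ Finset.range n, (B.weight (r' i) (w i) (r' (i+1)) : ℝ) * ((l:ℝ)⁻¹)^i
        = ∑ i ∈ Finset.range n, (B.weight (r i) (w' i) (r (i+1)) : ℝ) * ((l:ℝ)⁻¹)^i := by
      apply Finset.sum_congr rfl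
      intro i hi
      rw [Finset.mem_range] at hi
      rw [hrr i (by omega), hrr (i+1) (by omega), hag i hi]
    rw [hsame]
    have h1 := abs_le.1 (hW (r' n) (w n) (r' (n+1)))
    have h2 := abs_le.1 (hW (r n) (w' n) (r (n+1)))
    have hp : (0:ℝ) ≤ ((l:ℝ)⁻¹)^n := by positivity
    have hmul : ((B.weight (r' n) (w n) (r' (n+1)) : ℝ)
        - (B.weight (r n) (w' n) (r (n+1)) : ℝ)) * ((l:ℝ)⁻¹)^n ≤ (2*W) * ((l:ℝ)⁻¹)^n :=
      mul_le_mul_of_nonneg_right (by linarith) hp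
    nlinarith [hmul]
  linarith

include hl hB hW in
lemma finVal_agree_abs [Fintype Q'] {w w' : ℕ → Fin 2} {n : ℕ}
    (hag : ∀ i < n, w i = w' i) :
    |B.finVal w (n+1) - B.finVal w' (n+1)| ≤ 2*W*((l:ℝ)⁻¹)^n := by
  have h1 := finVal_agree_le B hl hB hW hag
  have h2 := finVal_agree_le B hl hB hW (fun i hi => (hag i hi).symm)
  rw [abs_le]
  constructor <;> linarith

end Bside2
end Sep

namespace Sep
open Finset

section Bside3
variable {Q' : Type} (B : NMDA (Fin 2) Q') {l : ℕ} (hl : 2 ≤ l) (hB : B.ConstDisc (l : ℚ))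
  {W : ℝ} (hW : ∀ q a q', |(B.weight q a q' : ℝ)| ≤ W)

def SI (w : ℕ → Fin 2) : Set ℝ := {x | ∃ r, B.InfRun w r ∧ x = B.infRunVal w r}

lemma infVal_eq_sInf (w : ℕ → Fin 2) : B.infVal w = sInf (SI B w) := rfl

lemma SI_nonempty (w : ℕ → Fin 2) : (SI B w).Nonempty := by
  obtain ⟨r, hr⟩ := infRun_exists B w
  exact ⟨_, r, hr, rfl⟩

include hl hB hW in
lemma SI_bddBelow (hW0 : 0 ≤ W) (w : ℕ → Fin 2) : BddBelow (SI B w) := by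
  refine ⟨-(2*W), ?_⟩
  rintro x ⟨r, hr, rfl⟩
  have := abs_le.1 (infRunVal_abs_le B hl hB hW hW0 hr.2)
  linarith [this.1]

include hl hB hW in
lemma infVal_le_infRunVal (hW0 : 0 ≤ W) {w : ℕ → Fin 2} {r : ℕ → Q'}
    (hr : B.InfRun w r) : B.infVal w ≤ B.infRunVal w r :=
  csInf_le (SI_bddBelow B hl hB hW hW0 w) ⟨r, hr, rfl⟩

def comb {X : Type} (n : ℕ) (r s : ℕ → X) : ℕ → X := fun i => if i < n then r i else s (i - n)

lemma comb_eq_low {n : ℕ} {r s : ℕ → Q'} (h0 : s 0 = r n) : ∀ i ≤ n, comb n r s i = r i := by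
  intro i hi
  unfold comb
  rcases Nat.lt_or_ge i n with h | h
  · rw [if_pos h]
  · have hin : i = n := by omega
    subst hin
    rw [if_neg (by omega), Nat.sub_self, h0]

lemma shf_comb {n : ℕ} {r s : ℕ → Q'} : shf n (comb n r s) = s := by
  funext i
  show comb n r s (n + i) = s i
  unfold comb
  rw [if_neg (by omega)]
  congr 1
  omega

lemma comb_run {w : ℕ → Fin 2} {n : ℕ} {r s : ℕ → Q'} (hn : 0 < n)
    (hr : B.FinRun w n r) (h0 : s 0 = r n)
    (hs : ∀ i, B.delta (s i) (shf n w i) (s (i+1))) : B.InfRun w (comb n r s) := by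
  constructor
  · rw [comb_eq_low h0 0 (by omega)]
    exact hr.1
  · intro i
    rcases Nat.lt_or_ge (i+1) n with h | h
    · rw [comb_eq_low h0 i (by omega), comb_eq_low h0 (i+1) (by omega)]
      exact hr.2 i (by omega)
    · rcases Nat.lt_or_ge i n with h2 | h2
      · rw [comb_eq_low h0 i (by omega), comb_eq_low h0 (i+1) (by omega)]
        exact hr.2 i (by omega)
      · have e1 : comb n r s i = s (i - n) := by unfold comb; rw [if_neg (by omega)]
        have e2 : comb n r s (i+1) = s (i - n + 1) := by
          unfold comb
          rw [if_neg (by omega)]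
          congr 1
          omega
        rw [e1, e2]
        have hd := hs (i - n)
        have e3 : shf n w (i - n) = w i := by
          show w (n + (i - n)) = w i
          congr 1
          omega
        rwa [e3] at hd

include hl hB hW in
lemma infVal_agree_le (hW0 : 0 ≤ W) {w w' : ℕ → Fin 2} {n : ℕ} (hn : 0 < n)
    (hag : ∀ i < n, w i = w' i) :
    B.infVal w ≤ B.infVal w' + 4*W*((l:ℝ)⁻¹)^n := by
  have hkey : ∀ x ∈ SI B w', B.infVal w ≤ x + 4*W*((l:ℝ)⁻¹)^n := by
    rintro x ⟨r, hr, rfl⟩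
    set s := extFrom B (shf n w) (r n) with hsdef
    have hs0 : s 0 = r n := rfl
    have hsd : ∀ i, B.delta (s i) (shf n w i) (s (i+1)) := fun i => extFrom_delta B _ _ i
    have hfr : B.FinRun w n r := ⟨hr.1, fun i hi => by rw [hag i hi]; exact hr.2 i⟩
    have hrun : B.InfRun w (comb n r s) := comb_run B hn hfr hs0 hsd
    have hval1 : B.infRunVal w (comb n r s)
        = B.runVal w (comb n r s) n + ((l:ℝ)⁻¹)^n * B.infRunVal (shf n w) s := by
      rw [infRunVal_split B hl hB hW hrun.2 n, shf_comb]
    have hval2 : B.infRunVal w' r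
        = B.runVal w' r n + ((l:ℝ)⁻¹)^n * B.infRunVal (shf n w') (shf n r) :=
      infRunVal_split B hl hB hW hr.2 n
    have hpre : B.runVal w (comb n r s) n = B.runVal w' r n :=
      runVal_congr B hag (comb_eq_low hs0)
    have hrd : ∀ i, B.delta (shf n r i) (shf n w' i) (shf n r (i+1)) := fun i => hr.2 (n+i)
    have ht1 := abs_le.1 (infRunVal_abs_le B hl hB hW hW0 hsd)
    have ht2 := abs_le.1 (infRunVal_abs_le B hl hB hW hW0 hrd)
    have hle : B.infVal w ≤ B.infRunVal w (comb n r s) :=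
      infVal_le_infRunVal B hl hB hW hW0 hrun
    have hp : (0:ℝ) ≤ ((l:ℝ)⁻¹)^n := by positivity
    have hmul : ((l:ℝ)⁻¹)^n * (B.infRunVal (shf n w) s - B.infRunVal (shf n w') (shf n r))
        ≤ ((l:ℝ)⁻¹)^n * (4*W) :=
      mul_le_mul_of_nonneg_left (by linarith) hp
    have hexp : ((l:ℝ)⁻¹)^n * (B.infRunVal (shf n w) s - B.infRunVal (shf n w') (shf n r))
        = ((l:ℝ)⁻¹)^n * B.infRunVal (shf n w) s
          - ((l:ℝ)⁻¹)^n * B.infRunVal (shf n w') (shf n r) := by ring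
    nlinarith [hmul, hexp]
  have hne := SI_nonempty B w'
  have hlow : B.infVal w - 4*W*((l:ℝ)⁻¹)^n ≤ sInf (SI B w') :=
    le_csInf hne (fun x hx => by linarith [hkey x hx])
  rw [infVal_eq_sInf B w']
  linarith

include hl hB hW in
lemma infVal_agree_abs [Fintype Q'] (hW0 : 0 ≤ W) {w w' : ℕ → Fin 2} {n : ℕ} (hn : 0 < n)
    (hag : ∀ i < n, w i = w' i) :
    |B.infVal w - B.infVal w'| ≤ 4*W*((l:ℝ)⁻¹)^n := by
  have h1 := infVal_agree_le B hl hB hW hW0 hn hag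
  have h2 := infVal_agree_le B hl hB hW hW0 hn (fun i hi => (hag i hi).symm)
  rw [abs_le]
  constructor <;> linarith

/-- finite runs of length `n` ending in `q` -/
def VS (w : ℕ → Fin 2) (n : ℕ) (q : Q') : Set ℝ :=
  {x | ∃ r, B.FinRun w n r ∧ r n = q ∧ x = B.runVal w r n}

lemma VS_finite [Fintype Q'] (w : ℕ → Fin 2) (n : ℕ) (q : Q') : (VS B w n q).Finite :=
  (runvals_finite B w n).subset (by rintro x ⟨r, _, _, rfl⟩; exact ⟨r, rfl⟩)

include hl hB hW in
lemma decomp [Fintype Q'] (hW0 : 0 ≤ W) (w : ℕ → Fin 2) {n : ℕ} (hn : 0 < n) :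
    ∃ q : Q', (VS B w n q).Nonempty ∧
      B.infVal w = sInf (VS B w n q) + ((l:ℝ)⁻¹)^n * (reInit B q).infVal (shf n w) := by
  classical
  have hB' : ∀ q : Q', (reInit B q).ConstDisc (l:ℚ) := fun q => hB
  have hW' : ∀ q : Q', ∀ p a p', |((reInit B q).weight p a p' : ℝ)| ≤ W := fun q => hW
  set M : Set ℝ := {x | ∃ q, (VS B w n q).Nonempty ∧
    x = sInf (VS B w n q) + ((l:ℝ)⁻¹)^n * (reInit B q).infVal (shf n w)} with hM
  have hMfin : M.Finite := by
    apply Set.Finite.subset (Set.finite_range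
      (fun q : Q' => sInf (VS B w n q) + ((l:ℝ)⁻¹)^n * (reInit B q).infVal (shf n w)))
    rintro x ⟨q, _, rfl⟩
    exact ⟨q, rfl⟩
  have hMne : M.Nonempty := by
    obtain ⟨r, hr⟩ := infRun_exists B w
    exact ⟨_, r n, ⟨_, r, ⟨hr.1, fun i _ => hr.2 i⟩, rfl, rfl⟩, rfl⟩
  have hp : (0:ℝ) ≤ ((l:ℝ)⁻¹)^n := by positivity
  obtain ⟨q0, hq0ne, hq0eq⟩ := hMne.csInf_mem hMfin
  have hge : sInf M ≤ B.infVal w := by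
    apply le_csInf (SI_nonempty B w)
    rintro x ⟨r, hr, rfl⟩
    have hsplit := infRunVal_split B hl hB hW hr.2 n
    have h1 : sInf (VS B w n (r n)) ≤ B.runVal w r n :=
      csInf_le (VS_finite B w n (r n)).bddBelow ⟨r, ⟨hr.1, fun i _ => hr.2 i⟩, rfl, rfl⟩
    have hsr : (reInit B (r n)).InfRun (shf n w) (shf n r) := by
      constructor
      · show r (n + 0) ∈ ({r n} : Set Q')
        simp
      · exact fun i => hr.2 (n + i)
    have h2 : (reInit B (r n)).infVal (shf n w) ≤ B.infRunVal (shf n w) (shf n r) := by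
      have := infVal_le_infRunVal (reInit B (r n)) hl (hB' _) (hW' _) hW0 hsr
      rwa [reInit_infRunVal] at this
    have hmul := mul_le_mul_of_nonneg_left h2 hp
    calc sInf M ≤ sInf (VS B w n (r n))
          + ((l:ℝ)⁻¹)^n * (reInit B (r n)).infVal (shf n w) :=
        csInf_le hMfin.bddBelow ⟨r n, ⟨_, r, ⟨hr.1, fun i _ => hr.2 i⟩, rfl, rfl⟩, rfl⟩
      _ ≤ B.infRunVal w r := by rw [hsplit]; linarith
  have hle : B.infVal w ≤ sInf (VS B w n q0)
      + ((l:ℝ)⁻¹)^n * (reInit B q0).infVal (shf n w) := by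
    apply le_of_forall_pos_le_add
    intro ε hε
    obtain ⟨rp, hrp, hrpn, hxp⟩ := (hq0ne).csInf_mem (VS_finite B w n q0)
    have hεl : (0:ℝ) < ε * (l:ℝ)^n := by
      have := lpos hl
      positivity
    obtain ⟨y, hy, hylt⟩ :=
      Real.lt_sInf_add_pos (SI_nonempty (reInit B q0) (shf n w)) hεl
    obtain ⟨s, hsrun, rfl⟩ := hy
    have hs0 : s 0 = rp n := by
      have h := hsrun.1
      rw [reInit_init, Set.mem_singleton_iff] at h
      rw [h, hrpn]
    have hsd : ∀ i, B.delta (s i) (shf n w i) (s (i+1)) := fun i => hsrun.2 i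
    have hrun : B.InfRun w (comb n rp s) := comb_run B hn hrp hs0 hsd
    have hsplit : B.infRunVal w (comb n rp s)
        = B.runVal w (comb n rp s) n + ((l:ℝ)⁻¹)^n * B.infRunVal (shf n w) s := by
      rw [infRunVal_split B hl hB hW hrun.2 n, shf_comb]
    have hpre : B.runVal w (comb n rp s) n = B.runVal w rp n :=
      runVal_congr B (fun _ _ => rfl) (comb_eq_low hs0)
    have hle1 : B.infVal w ≤ B.infRunVal w (comb n rp s) :=
      infVal_le_infRunVal B hl hB hW hW0 hrun
    have hpe : ((l:ℝ)⁻¹)^n * (ε * (l:ℝ)^n) = ε := by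
      have hl0 : (l:ℝ) ≠ 0 := ne_of_gt (lpos hl)
      rw [inv_pow]
      field_simp
    have hylt' : (reInit B q0).infRunVal (shf n w) s
        < (reInit B q0).infVal (shf n w) + ε * (l:ℝ)^n := by
      rw [infVal_eq_sInf]
      exact hylt
    rw [reInit_infRunVal] at hylt'
    have hmul := mul_le_mul_of_nonneg_left (le_of_lt hylt') hp
    have hexp : ((l:ℝ)⁻¹)^n * ((reInit B q0).infVal (shf n w) + ε * (l:ℝ)^n)
        = ((l:ℝ)⁻¹)^n * (reInit B q0).infVal (shf n w) + ε := by
      rw [mul_add, hpe]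
    rw [← hxp] at hpre
    linarith [hsplit, hpre, hle1]
  refine ⟨q0, hq0ne, le_antisymm hle ?_⟩
  rw [← hq0eq]
  exact hge

end Bside3
end Sep

namespace Sep
open Finset

section Final
variable {Q' : Type} [Fintype Q'] (B : NMDA (Fin 2) Q') {l : ℕ} (hl : 2 ≤ l)
  (hB : B.ConstDisc (l : ℚ)) {W : ℝ} (hW0 : 0 ≤ W)
  (hW : ∀ q a q', |(B.weight q a q' : ℝ)| ≤ W)
  {D : ℕ} (hD1 : 1 ≤ D) (hD : ∀ q a q', ∃ z : ℤ, (D:ℚ) * B.weight q a q' = (z:ℚ))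

/-- the suffix word 1 0^ω -/
def vd : ℕ → Fin 2 := fun i => if i = 0 then 1 else 0

lemma wk_agree_zw (k : ℕ) : ∀ i < 2*k, wk k i = zw i := by
  intro i hi
  show (if i = 2*k then (1 : Fin 2) else 0) = 0
  rw [if_neg (by omega)]

include hl hB hW0 hW in
lemma magnitude_fin (hl3 : 3 ≤ l)
    (hfin : ∀ (w : ℕ → Fin 2) (n : ℕ), 0 < n → B.finVal w n = Aaut.finVal w n) :
    False := by
  obtain ⟨K, hK⟩ := pow_unbounded_of_one_lt (R := ℝ) (2*W) (by norm_num : (1:ℝ) < 3/2)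
  have h1 : B.finVal (wk K) (2*K+1) = (6:ℝ)⁻¹^K := by
    rw [hfin _ _ (by omega), Aaut_finVal_wk]
  have h2 : B.finVal zw (2*K+1) = 0 := by
    rw [hfin _ _ (by omega), Aaut_finVal_zw]
  have habs := finVal_agree_abs B hl hB hW (wk_agree_zw K)
  rw [h1, h2, sub_zero, abs_of_nonneg (by positivity)] at habs
  have hinv : ((l:ℝ))⁻¹ ≤ 1/3 := by
    have h3 : (3:ℝ) ≤ (l:ℝ) := by exact_mod_cast hl3
    have := inv_anti₀ (by norm_num : (0:ℝ) < 3) h3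
    linarith
  have hp9 : ((l:ℝ)⁻¹)^(2*K) ≤ ((1:ℝ)/9)^K := by
    calc ((l:ℝ)⁻¹)^(2*K) ≤ ((1:ℝ)/3)^(2*K) :=
          pow_le_pow_left₀ (by positivity) hinv _
      _ = (((1:ℝ)/3)^2)^K := by rw [← pow_mul]
      _ = ((1:ℝ)/9)^K := by norm_num
  have hchain : (6:ℝ)⁻¹^K ≤ 2*W*((1:ℝ)/9)^K := by
    have := mul_le_mul_of_nonneg_left hp9 (by linarith : (0:ℝ) ≤ 2*W)
    linarith
  have hfin9 : ((6:ℝ)⁻¹)^K * (9:ℝ)^K = ((3:ℝ)/2)^K := by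
    rw [← mul_pow]; norm_num
  have hfin9' : ((1:ℝ)/9)^K * (9:ℝ)^K = 1 := by
    rw [← mul_pow]; norm_num
  have h9 : (0:ℝ) ≤ (9:ℝ)^K := by positivity
  have hm := mul_le_mul_of_nonneg_right hchain h9
  rw [hfin9] at hm
  have hfinal : ((3:ℝ)/2)^K ≤ 2*W := by
    calc ((3:ℝ)/2)^K ≤ 2*W*((1:ℝ)/9)^K * 9^K := hm
      _ = 2*W*(((1:ℝ)/9)^K * 9^K) := by ring
      _ = 2*W := by rw [hfin9']; ring
  linarith

include hl hB hW0 hW in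
lemma magnitude_inf (hl3 : 3 ≤ l)
    (hinf : ∀ (w : ℕ → Fin 2), B.infVal w = Aaut.infVal w) :
    False := by
  obtain ⟨K0, hK0⟩ := pow_unbounded_of_one_lt (R := ℝ) (4*W) (by norm_num : (1:ℝ) < 3/2)
  set K := K0 + 1 with hKdef
  have hK : 4*W < ((3:ℝ)/2)^K :=
    lt_of_lt_of_le hK0 (pow_le_pow_right₀ (by norm_num) (by omega))
  have h1 : B.infVal (wk K) = (6:ℝ)⁻¹^K := by rw [hinf _, Aaut_infVal_wk]
  have h2 : B.infVal zw = 0 := by rw [hinf _, Aaut_infVal_zw]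
  have habs := infVal_agree_abs B hl hB hW hW0 (by omega : 0 < 2*K) (wk_agree_zw K)
  rw [h1, h2, sub_zero, abs_of_nonneg (by positivity)] at habs
  have hinv : ((l:ℝ))⁻¹ ≤ 1/3 := by
    have h3 : (3:ℝ) ≤ (l:ℝ) := by exact_mod_cast hl3
    have := inv_anti₀ (by norm_num : (0:ℝ) < 3) h3
    linarith
  have hp9 : ((l:ℝ)⁻¹)^(2*K) ≤ ((1:ℝ)/9)^K := by
    calc ((l:ℝ)⁻¹)^(2*K) ≤ ((1:ℝ)/3)^(2*K) :=
          pow_le_pow_left₀ (by positivity) hinv _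
      _ = (((1:ℝ)/3)^2)^K := by rw [← pow_mul]
      _ = ((1:ℝ)/9)^K := by norm_num
  have hchain : (6:ℝ)⁻¹^K ≤ 4*W*((1:ℝ)/9)^K := by
    have := mul_le_mul_of_nonneg_left hp9 (by linarith : (0:ℝ) ≤ 4*W)
    linarith
  have hfin9 : ((6:ℝ)⁻¹)^K * (9:ℝ)^K = ((3:ℝ)/2)^K := by
    rw [← mul_pow]; norm_num
  have hfin9' : ((1:ℝ)/9)^K * (9:ℝ)^K = 1 := by
    rw [← mul_pow]; norm_num
  have h9 : (0:ℝ) ≤ (9:ℝ)^K := by positivity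
  have hm := mul_le_mul_of_nonneg_right hchain h9
  rw [hfin9] at hm
  have hfinal : ((3:ℝ)/2)^K ≤ 4*W := by
    calc ((3:ℝ)/2)^K ≤ 4*W*((1:ℝ)/9)^K * 9^K := hm
      _ = 4*W*(((1:ℝ)/9)^K * 9^K) := by ring
      _ = 4*W := by rw [hfin9']; ring
  linarith

include hl hB hD1 hD in
lemma lattice_fin (hl2 : l = 2)
    (hfin : ∀ (w : ℕ → Fin 2) (n : ℕ), 0 < n → B.finVal w n = Aaut.finVal w n) :
    False := by
  subst hl2
  have hv : B.finVal (wk D) (2*D+1) = (6:ℝ)⁻¹^D := by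
    rw [hfin _ _ (by omega), Aaut_finVal_wk]
  obtain ⟨z, hz⟩ := finVal_lattice B hl hB hD (wk D) (2*D)
  rw [hv] at hz
  have hx : (0:ℝ) < (2:ℝ)^D := by positivity
  have hy : (0:ℝ) < (3:ℝ)^D := by positivity
  have hD0 : (0:ℝ) < (D:ℝ) := by exact_mod_cast (by omega : 0 < D)
  have e1 : ((6:ℝ)⁻¹)^D = ((2:ℝ)^D * 3^D)⁻¹ := by
    rw [inv_pow, show ((6:ℝ))^D = 2^D*3^D from by rw [← mul_pow]; norm_num]
  have e3 : ((2:ℝ))^(2*D) = 2^D * 2^D := by rw [two_mul, pow_add]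
  push_cast at hz
  rw [e1, e3] at hz
  have hx0 : ((2:ℝ))^D ≠ 0 := ne_of_gt hx
  have hy0 : ((3:ℝ))^D ≠ 0 := ne_of_gt hy
  have key : (z:ℝ) * 3^D = (D:ℝ) * 2^D := by
    rw [← hz]
    field_simp
  have keyZ : z * 3^D = (D:ℤ) * 2^D := by exact_mod_cast key
  have hzposR : (0:ℝ) < (z:ℝ) := by nlinarith [key, hx, hy, hD0]
  have hzpos : 0 < z := by exact_mod_cast hzposR
  have keyN : z.toNat * 3^D = D * 2^D := by
    have h1 : ((z.toNat * 3^D : ℕ) : ℤ) = ((D * 2^D : ℕ) : ℤ) := by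
      push_cast
      rw [Int.toNat_of_nonneg (le_of_lt hzpos)]
      linarith [keyZ]
    exact_mod_cast h1
  have hdvd : 3^D ∣ D * 2^D := ⟨z.toNat, by rw [← keyN]; ring⟩
  have hcop : Nat.Coprime (3^D) (2^D) :=
    Nat.Coprime.pow _ _ (show Nat.Coprime 3 2 by decide)
  have hdvdD : 3^D ∣ D := hcop.dvd_of_dvd_mul_right hdvd
  have hle := Nat.le_of_dvd (by omega) hdvdD
  have := Nat.lt_pow_self (n := D) (by norm_num : 1 < 3)
  omega

include hl hB hW0 hW hD1 hD in
lemma pigeon_inf (hl2 : l = 2)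
    (hinf : ∀ (w : ℕ → Fin 2), B.infVal w = Aaut.infVal w) : False := by
  subst hl2
  classical
  have hD0 : (0:ℝ) < (D:ℝ) := by exact_mod_cast (by omega : 0 < D)
  have hmain : ∀ k : ℕ, ∃ q : Q', ∃ z : ℤ,
      ((2:ℝ)/3)^(k+1) = 2*(z:ℝ)/(D:ℝ) + (reInit B q).infVal vd := by
    intro k
    obtain ⟨q, hqne, heq⟩ :=
      decomp B hl hB hW hW0 (wk (k+1)) (n := 2*k+1+1) (by omega)
    have hshf : shf (2*k+1+1) (wk (k+1)) = vd := by
      funext i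
      show (if (2*k+1+1) + i = 2*(k+1) then (1:Fin 2) else 0)
        = (if i = 0 then (1:Fin 2) else 0)
      by_cases h : i = 0
      · subst h
        rw [if_pos (by omega), if_pos rfl]
      · rw [if_neg (by omega), if_neg h]
    rw [hshf] at heq
    have hval : B.infVal (wk (k+1)) = (6:ℝ)⁻¹^(k+1) := by
      rw [hinf _, Aaut_infVal_wk]
    obtain ⟨r, hrF, hrn, hrv⟩ := hqne.csInf_mem (VS_finite B (wk (k+1)) (2*k+1+1) q)
    obtain ⟨z, hz⟩ := runVal_lattice B hl hB hD (m := 2*k+1) hrF.2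
    rw [← hrv] at hz
    refine ⟨q, z, ?_⟩
    set s := sInf (VS B (wk (k+1)) (2*k+1+1) q) with hsdef
    set x := (reInit B q).infVal vd with hxd
    rw [hval] at heq
    push_cast at heq
    have hP2 : (0:ℝ) < (2:ℝ)^(2*k+1) := by positivity
    push_cast at hz
    have hsz : s = (z:ℝ)/((D:ℝ)*(2:ℝ)^(2*k+1)) := by
      rw [eq_div_iff (by positivity)]
      linear_combination hz
    have h4 : ((2:ℝ)/3)^(k+1) = (2*(2:ℝ)^(2*k+1)) * ((6:ℝ)⁻¹)^(k+1) := by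
      have h44 : ((2:ℝ)/3) = 4 * 6⁻¹ := by norm_num
      rw [h44, mul_pow]
      congr 1
      rw [show (4:ℝ) = 2^2 from by norm_num, ← pow_mul,
        show 2*(k+1) = (2*k+1)+1 from by ring, pow_succ]
      ring
    have hinv2 : ((2:ℝ)⁻¹)^(2*k+1+1) = ((2:ℝ)^(2*k+1+1))⁻¹ := inv_pow _ _
    have hP2' : ((2:ℝ))^(2*k+1) ≠ 0 := ne_of_gt hP2
    have hD0' : (D:ℝ) ≠ 0 := ne_of_gt hD0
    rw [h4, heq, hinv2, hsz, pow_succ (2:ℝ) (2*k+1)]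
    rw [mul_add]
    congr 1
    · rw [mul_div_assoc', div_eq_div_iff (by positivity) hD0']
      ring
    · rw [← mul_assoc, mul_comm (2:ℝ) ((2:ℝ)^(2*k+1)), mul_inv_cancel₀ (by positivity),
        one_mul]
  choose qf zf hqz using hmain
  obtain ⟨K, hK⟩ := exists_pow_lt_of_lt_one
    (show (0:ℝ) < 2/(D:ℝ) by positivity) (by norm_num : (2:ℝ)/3 < 1)
  obtain ⟨a, b, hab, hfeq⟩ := Finite.exists_ne_map_eq_of_infinite (fun j : ℕ => qf (K + j))
  wlog hlt : a < b generalizing a b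
  · exact this b a (Ne.symm hab) hfeq.symm (by omega)
  have h1 := hqz (K + a)
  have h2 := hqz (K + b)
  rw [hfeq] at h1
  have hsub : ((2:ℝ)/3)^(K+a+1) - ((2:ℝ)/3)^(K+b+1)
      = 2*((zf (K+a) : ℝ) - (zf (K+b) : ℝ))/D := by
    rw [h1, h2]
    ring
  have hmono : ((2:ℝ)/3)^(K+b+1) < ((2:ℝ)/3)^(K+a+1) :=
    pow_lt_pow_right_of_lt_one₀ (by norm_num) (by norm_num) (by omega)
  have hupper : ((2:ℝ)/3)^(K+a+1) ≤ ((2:ℝ)/3)^K :=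
    pow_le_pow_of_le_one (by norm_num) (by norm_num) (by omega)
  have hzero : (0:ℝ) < ((2:ℝ)/3)^(K+b+1) := by positivity
  have hdiff1 : (0:ℝ) < 2*((zf (K+a):ℝ) - (zf (K+b):ℝ))/D := by
    rw [← hsub]; linarith
  have hdiff2 : 2*((zf (K+a):ℝ) - (zf (K+b):ℝ))/D < 2/D := by
    rw [← hsub]; linarith
  have ht1 : (0:ℝ) < (zf (K+a):ℝ) - (zf (K+b):ℝ) := by
    rw [lt_div_iff₀ hD0] at hdiff1
    nlinarith
  have ht2 : (zf (K+a):ℝ) - (zf (K+b):ℝ) < 1 := by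
    rw [div_lt_div_iff₀ hD0 hD0] at hdiff2
    nlinarith
  have hi1 : (0:ℤ) < zf (K+a) - zf (K+b) := by exact_mod_cast ht1
  have hi2 : zf (K+a) - zf (K+b) < 1 := by exact_mod_cast ht2
  omega

end Final
end Sep



/-- There exists a time-oriented integral NMDA (in every run, the transition at the
`i`-th 0-indexed position — i.e., at odd 1-indexed positions — has discount factor 2
when `i` is even, and 3 when `i` is odd) such that no integral NDA (NMDA with a
constant integer discount factor ≥ 2) is equivalent to it, with respect to nonempty
finite words and to infinite words. -/
theorem time_oriented_nmda_more_expressive_than_nda :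
    ∃ (Q : Type) (_ : Fintype Q) (A : NMDA (Fin 2) Q),
      A.Integral ∧
        (∀ (w : ℕ → Fin 2) (n : ℕ) (r : ℕ → Q), A.FinRun w (n + 1) r →
          A.disc (r n) (w n) (r (n + 1)) = if n % 2 = 0 then 2 else 3) ∧
        ∀ (l : ℕ), 2 ≤ l → ∀ (Q' : Type) (_ : Fintype Q') (B : NMDA (Fin 2) Q'),
          B.ConstDisc (l : ℚ) →
            (¬ ∀ (w : ℕ → Fin 2) (n : ℕ), 0 < n → B.finVal w n = A.finVal w n) ∧
              ¬ ∀ w : ℕ → Fin 2, B.infVal w = A.infVal w := by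
  refine ⟨Fin 2, inferInstance, Sep.Aaut, ?_, ?_, ?_⟩
  · intro q a q' _
    by_cases h : q = 0
    · exact ⟨2, by rw [Sep.Aaut_disc, if_pos h]; norm_num⟩
    · exact ⟨3, by rw [Sep.Aaut_disc, if_neg h]; norm_num⟩
  · intro w n r h
    rw [Sep.Aaut_finrun_eq h n (by omega), Sep.Aaut_disc]
    by_cases hn : n % 2 = 0
    · rw [if_pos ((Sep.cast_eq_zero_iff n).2 hn), if_pos hn]
    · rw [if_neg (fun hh => hn ((Sep.cast_eq_zero_iff n).1 hh)), if_neg hn]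
  · intro l hl Q' hQ B hB
    haveI := hQ
    obtain ⟨W, hW0, hW⟩ := Sep.weight_bound B
    obtain ⟨D, hD1, hD⟩ := Sep.den_bound B
    constructor
    · intro hfin
      rcases Nat.lt_or_ge l 3 with h3 | h3
      · exact Sep.lattice_fin B hl hB hD1 hD (by omega) hfin
      · exact Sep.magnitude_fin B hl hB hW0 hW h3 hfin
    · intro hinf
      rcases Nat.lt_or_ge l 3 with h3 | h3
      · exact Sep.pigeon_inf B hl hB hW0 hW hD1 hD (by omega) hinf
      · exact Sep.magnitude_inf B hl hB hW0 hW h3 hinf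
end

section
/- Let A be an NMDA over a finite alphabet Σ, let ν ∈ ℚ, and let w be an infinite word with A(w) < ν. Then there exists a nonempty finite prefix u of w such that A(u) < ν. -/
/-- If the value of an NMDA on an infinite word `w` is strictly below a rational
threshold `ν`, then the value of the automaton on some nonempty finite prefix of `w`
is also strictly below `ν`. -/
theorem nmda_strict_threshold_on_prefix {α Q : Type} [Fintype α] [Fintype Q]
    (A : NMDA α Q) (ν : ℚ) (w : ℕ → α) (h : A.infVal w < (ν : ℝ)) :
    ∃ n : ℕ, 0 < n ∧ A.finVal w n < (ν : ℝ) := by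
  classical
  -- an infinite run exists
  obtain ⟨q0, hq0⟩ := A.init_nonempty
  have hQ : Nonempty Q := ⟨q0⟩
  -- the value set of infinite runs is nonempty
  have hrun : ∃ r : ℕ → Q, A.InfRun w r := by
    refine ⟨fun n => Nat.rec q0 (fun n q => (A.complete q (w n)).choose) n, hq0, ?_⟩
    intro i
    exact (A.complete _ (w i)).choose_spec
  have hne : {x : ℝ | ∃ r : ℕ → Q, A.InfRun w r ∧ x = A.infRunVal w r}.Nonempty := by
    obtain ⟨r, hr⟩ := hrun
    exact ⟨A.infRunVal w r, r, hr, rfl⟩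
  obtain ⟨x, ⟨r, hr, rfl⟩, hx⟩ := exists_lt_of_csInf_lt hne h
  -- constants
  have Tne : (Finset.univ : Finset (Q × α × Q)).Nonempty := by
    refine ⟨(q0, w 0, q0), Finset.mem_univ _⟩
  set M : ℝ := (Finset.univ : Finset (Q × α × Q)).sup'
      Tne (fun t => |(A.weight t.1 t.2.1 t.2.2 : ℝ)|) with hM
  have hMw : ∀ q a q', |(A.weight q a q' : ℝ)| ≤ M := by
    intro q a q'
    exact Finset.le_sup' (f := fun t : Q × α × Q => |(A.weight t.1 t.2.1 t.2.2 : ℝ)|)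
      (Finset.mem_univ (q, a, q'))
  have hM0 : 0 ≤ M := le_trans (abs_nonneg _) (hMw q0 (w 0) q0)
  set D : Finset (Q × α × Q) :=
    Finset.univ.filter (fun t => A.delta t.1 t.2.1 t.2.2) with hD
  have Dne : D.Nonempty := by
    obtain ⟨q', hq'⟩ := A.complete q0 (w 0)
    exact ⟨(q0, w 0, q'), by simp [hD, hq']⟩
  set lam : ℝ := D.inf' Dne (fun t => (A.disc t.1 t.2.1 t.2.2 : ℝ)) with hlam
  have hlam1 : 1 < lam := by
    rw [hlam, Finset.lt_inf'_iff]
    intro t ht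
    rw [hD, Finset.mem_filter] at ht
    exact_mod_cast A.disc_gt_one _ _ _ ht.2
  have hlam0 : 0 < lam := lt_trans one_pos hlam1
  have hmemD : ∀ i, ((r i, w i, r (i + 1)) : Q × α × Q) ∈ D := by
    intro i; simp [hD, hr.2 i]
  have hdisc : ∀ i, lam ≤ (A.disc (r i) (w i) (r (i + 1)) : ℝ) := by
    intro i
    exact Finset.inf'_le (f := fun t : Q × α × Q => (A.disc t.1 t.2.1 t.2.2 : ℝ)) (hmemD i)
  have hdisc0 : ∀ i, (0 : ℝ) < (A.disc (r i) (w i) (r (i + 1)) : ℝ) := fun i =>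
    lt_of_lt_of_le hlam0 (hdisc i)
  set a : ℕ → ℝ := fun i =>
    (A.weight (r i) (w i) (r (i + 1)) : ℝ) *
      ∏ j ∈ Finset.range i, (1 / (A.disc (r j) (w j) (r (j + 1)) : ℝ)) with ha
  have hprod_nonneg : ∀ i, (0 : ℝ) ≤
      ∏ j ∈ Finset.range i, (1 / (A.disc (r j) (w j) (r (j + 1)) : ℝ)) := by
    intro i
    exact Finset.prod_nonneg (fun j _ => le_of_lt (one_div_pos.mpr (hdisc0 j)))
  have hprod_le : ∀ i,
      (∏ j ∈ Finset.range i, (1 / (A.disc (r j) (w j) (r (j + 1)) : ℝ))) ≤ (1 / lam) ^ i := by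
    intro i
    calc (∏ j ∈ Finset.range i, (1 / (A.disc (r j) (w j) (r (j + 1)) : ℝ)))
        ≤ ∏ _j ∈ Finset.range i, (1 / lam) := by
          refine Finset.prod_le_prod (fun j _ => le_of_lt (one_div_pos.mpr (hdisc0 j)))
            (fun j _ => one_div_le_one_div_of_le hlam0 (hdisc j))
      _ = (1 / lam) ^ i := by rw [Finset.prod_const, Finset.card_range]
  have habs : ∀ i, ‖a i‖ ≤ M * (1 / lam) ^ i := by
    intro i
    rw [ha]
    simp only [Real.norm_eq_abs, abs_mul, abs_of_nonneg (hprod_nonneg i)]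
    exact mul_le_mul (hMw _ _ _) (hprod_le i) (hprod_nonneg i) hM0
  have hsum : Summable a := by
    refine Summable.of_norm_bounded (Summable.mul_left M ?_) habs
    refine summable_geometric_of_lt_one (by positivity) ?_
    rw [div_lt_one hlam0]; exact hlam1
  have htend : Filter.Tendsto (fun n => ∑ i ∈ Finset.range n, a i)
      Filter.atTop (nhds (A.infRunVal w r)) := by
    have := hsum.hasSum.tendsto_sum_nat
    convert this using 2
    rfl
  have hev : ∀ᶠ n in Filter.atTop, (∑ i ∈ Finset.range n, a i) < (ν : ℝ) :=
    htend.eventually (gt_mem_nhds hx)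
  obtain ⟨N, hN⟩ := Filter.eventually_atTop.mp hev
  refine ⟨N + 1, Nat.succ_pos N, ?_⟩
  -- finVal set is bounded below
  have hbdd : BddBelow {x : ℝ | ∃ r' : ℕ → Q, A.FinRun w (N + 1) r' ∧ x = A.runVal w r' (N + 1)} := by
    refine ⟨-((N + 1 : ℕ) * M), ?_⟩
    rintro x ⟨r', hr', rfl⟩
    have : ∀ i ∈ Finset.range (N + 1), -M ≤
        (A.weight (r' i) (w i) (r' (i + 1)) : ℝ) *
          ∏ j ∈ Finset.range i, (1 / (A.disc (r' j) (w j) (r' (j + 1)) : ℝ)) := by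
      intro i hi
      rw [Finset.mem_range] at hi
      have hp0 : (0 : ℝ) ≤ ∏ j ∈ Finset.range i, (1 / (A.disc (r' j) (w j) (r' (j + 1)) : ℝ)) := by
        refine Finset.prod_nonneg (fun j hj => ?_)
        rw [Finset.mem_range] at hj
        have := A.disc_gt_one _ _ _ (hr'.2 j (lt_trans hj hi))
        have : (1 : ℝ) < (A.disc (r' j) (w j) (r' (j + 1)) : ℝ) := by exact_mod_cast this
        positivity
      have hp1 : (∏ j ∈ Finset.range i, (1 / (A.disc (r' j) (w j) (r' (j + 1)) : ℝ))) ≤ 1 := by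
        refine Finset.prod_le_one (fun j hj => ?_) (fun j hj => ?_) <;>
          rw [Finset.mem_range] at hj
        · have := A.disc_gt_one _ _ _ (hr'.2 j (lt_trans hj hi))
          have : (1 : ℝ) < (A.disc (r' j) (w j) (r' (j + 1)) : ℝ) := by exact_mod_cast this
          positivity
        · have := A.disc_gt_one _ _ _ (hr'.2 j (lt_trans hj hi))
          have h1 : (1 : ℝ) < (A.disc (r' j) (w j) (r' (j + 1)) : ℝ) := by exact_mod_cast this
          rw [div_le_one (lt_trans one_pos h1)]
          exact le_of_lt h1
      calc -M ≤ -|(A.weight (r' i) (w i) (r' (i + 1)) : ℝ)| * 1 := by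
              rw [mul_one]; exact neg_le_neg (hMw _ _ _)
        _ ≤ (A.weight (r' i) (w i) (r' (i + 1)) : ℝ) *
              ∏ j ∈ Finset.range i, (1 / (A.disc (r' j) (w j) (r' (j + 1)) : ℝ)) := by
              rcases le_or_gt 0 ((A.weight (r' i) (w i) (r' (i + 1)) : ℝ)) with hw | hw
              · refine le_trans ?_ (mul_nonneg hw hp0)
                simp [abs_nonneg]
              · rw [abs_of_neg hw, neg_neg]
                exact mul_le_mul_of_nonpos_left hp1 (le_of_lt hw)
    have := Finset.sum_le_sum this
    rw [Finset.sum_const, Finset.card_range, nsmul_eq_mul, mul_neg] at this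
    exact le_trans (le_of_eq rfl) this
  have hmem : A.runVal w r (N + 1) ∈
      {x : ℝ | ∃ r' : ℕ → Q, A.FinRun w (N + 1) r' ∧ x = A.runVal w r' (N + 1)} :=
    ⟨r, ⟨hr.1, fun i _ => hr.2 i⟩, rfl⟩
  have hle : A.finVal w (N + 1) ≤ A.runVal w r (N + 1) := csInf_le hbdd hmem
  have : A.runVal w r (N + 1) < (ν : ℝ) := by
    have := hN (N + 1) (Nat.le_succ N)
    simpa [NMDA.runVal, ha] using this
  exact lt_of_le_of_lt hle this
end

section
/- Let A be an integral NMDA, let ν ∈ ℚ be a threshold, and let d be a common denominator of ν and of all transition weights of A. For a finite run r, define its normalized difference from ν as Δ(r) = ρ(r) · (A(r) − ν), where ρ(r) is the product of the discount factors along r. Then for every state q of A, the set D_q = {Δ(r) : r is a finite run of A ending in q} is contained in (1/d)·ℤ, and its infimum is either −∞ or is attained by some finite run ending in q. -/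
/-- The normalized difference of a finite run from the threshold `ν`: the accumulated
discount factor along the run times the difference between the run's value and `ν`. -/
noncomputable def NMDA.normDiff {α Q : Type} (A : NMDA α Q) (ν : ℚ)
    (w : ℕ → α) (r : ℕ → Q) (n : ℕ) : ℝ :=
  (∏ i ∈ Finset.range n, (A.disc (r i) (w i) (r (i + 1)) : ℝ)) *
    (A.runVal w r n - (ν : ℝ))

/-- The set of normalized differences from `ν` of all finite runs of `A` ending in `q`. -/
def NMDA.normDiffSet {α Q : Type} (A : NMDA α Q) (ν : ℚ) (q : Q) : Set ℝ :=
  {x | ∃ (w : ℕ → α) (n : ℕ) (r : ℕ → Q),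
    A.FinRun w n r ∧ r n = q ∧ x = A.normDiff ν w r n}

lemma normDiff_key {α Q : Type}
    (A : NMDA α Q) (hInt : A.Integral) (ν : ℚ) (d : ℕ) (hd : 0 < d)
    (hν : ∃ k : ℤ, ν = (k : ℚ) / d)
    (hw : ∀ q a q', A.delta q a q' → ∃ k : ℤ, A.weight q a q' = (k : ℚ) / d)
    (w : ℕ → α) (r : ℕ → Q) :
    ∀ n : ℕ, A.FinRun w n r → ∃ k : ℤ, A.normDiff ν w r n = (k : ℝ) / d := by
  have hd' : (d : ℝ) ≠ 0 := by positivity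
  intro n
  induction n with
  | zero =>
    intro _
    obtain ⟨k, hk⟩ := hν
    refine ⟨-k, ?_⟩
    simp [NMDA.normDiff, NMDA.runVal, hk]
    push_cast
    ring
  | succ n ih =>
    intro hr
    have hr' : A.FinRun w n r := ⟨hr.1, fun i hi => hr.2 i (by omega)⟩
    obtain ⟨j, hj⟩ := ih hr'
    have hδ : A.delta (r n) (w n) (r (n + 1)) := hr.2 n (by omega)
    obtain ⟨k, hk⟩ := hInt _ _ _ hδ
    obtain ⟨m, hm⟩ := hw _ _ _ hδ
    have hPQ : (∏ i ∈ Finset.range n, (A.disc (r i) (w i) (r (i + 1)) : ℝ)) *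
        (∏ i ∈ Finset.range n, (1 / (A.disc (r i) (w i) (r (i + 1)) : ℝ))) = 1 := by
      rw [← Finset.prod_mul_distrib]
      apply Finset.prod_eq_one
      intro i hi
      have hgt := A.disc_gt_one _ _ _ (hr.2 i (by simp at hi; omega))
      have : (A.disc (r i) (w i) (r (i + 1)) : ℝ) ≠ 0 := by
        have : (1 : ℝ) < (A.disc (r i) (w i) (r (i + 1)) : ℝ) := by exact_mod_cast hgt
        linarith
      field_simp
    have hstep : A.normDiff ν w r (n + 1) =
        (A.disc (r n) (w n) (r (n + 1)) : ℝ) * A.normDiff ν w r n +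
          (A.disc (r n) (w n) (r (n + 1)) : ℝ) * (A.weight (r n) (w n) (r (n + 1)) : ℝ) := by
      simp only [NMDA.normDiff, NMDA.runVal, Finset.prod_range_succ, Finset.sum_range_succ]
      linear_combination ((A.disc (r n) (w n) (r (n + 1)) : ℝ) *
        (A.weight (r n) (w n) (r (n + 1)) : ℝ)) * hPQ
    refine ⟨k * j + k * m, ?_⟩
    rw [hstep, hj, hk, hm]
    push_cast
    field_simp

/-- For an integral NMDA `A`, a threshold `ν`, and a common denominator `d` of `ν` and
of all transition weights, the set of normalized differences of finite runs ending in a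
state `q` consists of integer multiples of `1/d`; consequently, whenever the set is
nonempty, its infimum is either `−∞` (the set is unbounded below) or is attained by
some finite run ending in `q`. -/
theorem integral_nmda_normalized_differences {α Q : Type} [Fintype α] [Fintype Q]
    (A : NMDA α Q) (hInt : A.Integral) (ν : ℚ) (d : ℕ) (hd : 0 < d)
    (hν : ∃ k : ℤ, ν = (k : ℚ) / d)
    (hw : ∀ q a q', A.delta q a q' → ∃ k : ℤ, A.weight q a q' = (k : ℚ) / d)
    (q : Q) :
    (∀ x ∈ A.normDiffSet ν q, ∃ k : ℤ, x = (k : ℝ) / d) ∧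
      ((A.normDiffSet ν q).Nonempty → BddBelow (A.normDiffSet ν q) →
        ∃ x ∈ A.normDiffSet ν q, ∀ y ∈ A.normDiffSet ν q, x ≤ y) := by
  classical
  have hd' : (0 : ℝ) < d := by positivity
  have part1 : ∀ x ∈ A.normDiffSet ν q, ∃ k : ℤ, x = (k : ℝ) / d := by
    rintro x ⟨w, n, r, hr, _, hx⟩
    obtain ⟨k, hk⟩ := normDiff_key A hInt ν d hd hν hw w r n hr
    exact ⟨k, hx ▸ hk⟩
  refine ⟨part1, fun hne hbdd => ?_⟩
  obtain ⟨b, hb⟩ := hbdd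
  set T : Set ℤ := {k : ℤ | ((k : ℝ) / d) ∈ A.normDiffSet ν q} with hT
  have hTne : ∃ k, k ∈ T := by
    obtain ⟨x, hx⟩ := hne
    obtain ⟨k, hk⟩ := part1 x hx
    exact ⟨k, by rwa [hT, Set.mem_setOf_eq, ← hk]⟩
  have hTbdd : ∃ c : ℤ, ∀ k ∈ T, c ≤ k := by
    refine ⟨⌈(b : ℝ) * d⌉, fun k hk => ?_⟩
    have h1 : b ≤ (k : ℝ) / d := hb hk
    have h2 : (b : ℝ) * d ≤ (k : ℝ) := by
      rw [← le_div_iff₀ hd']; exact h1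
    exact_mod_cast Int.ceil_le.mpr h2
  obtain ⟨k₀, hk₀, hleast⟩ := Int.exists_least_of_bdd hTbdd hTne
  refine ⟨(k₀ : ℝ) / d, hk₀, fun y hy => ?_⟩
  obtain ⟨k, hk⟩ := part1 y hy
  have : k ∈ T := by rwa [hT, Set.mem_setOf_eq, ← hk]
  have hle : k₀ ≤ k := hleast k this
  rw [hk]
  gcongr
end
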